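/- arXiv:1406.4353 — 10 statements merged into one kernel-verified Lean document; each statement's English description precedes it below -/
import Mathlib

section
/- Let H be a nonzero additive subgroup of ℚ and let K be a nonzero torsion-free abelian group of finite rank. Let G = H × K, ordered by the positive cone G⁺ = {(h,k) : h > 0} ∪ {(0,0)}. Suppose there exist a maximal ℤ-linearly independent family k₁′, …, k_n′ of elements of K and an element h′ ∈ H with h′ > 0 such that for every prime p and all integers c₁, …, c_n with p not dividing gcd(c₁,…,c_n): if c₁k₁′ + ⋯ + c_nk_n′ ∈ p·K, then h′ ∉ p·H. Then G is not ultrasimplicial; more precisely, there is no finite ℤ-linearly independent subset S of G⁺ such that each of the 2n+1 elements (h′,0), (h′,k₁′), …, (h′,k_n′), (h′,−k₁′), …, (h′,−k_n′) of G⁺ can be written as a sum of elements of S with nonnegative integer coefficients. -/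
/-!
Let `S ⊆ G⁺` be independent and represent the `2n+1` elements. Subtracting the representation
of `(h', 0)` from those of `(h', ±k'ᵢ)`, uniqueness of coordinates gives an integer matrix `A`
expressing `(h', 0)` and the `(0, k'ᵢ)` through `S`, whose rows vanish wherever the coefficient
of `(h', 0)` does. Since `H × K` has rank `n + 1`, `S` has exactly `n + 1` elements and all
coefficients of `(h', 0)` are positive; dividing them by their gcd we may assume them coprime.
Writing the first coordinates of `S` as `mₓ β` with `β ∈ H` and `m` coprime, `h' = w β` with
`w = ∑ mₓ Aₓ₀ ≥ 2`. For a prime `q ∣ w` the vector `m` lies in the left kernel of `A` modulo `q`,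
so some `u ≢ 0` has `A u ≡ 0`. Then `∑ uᵢ k'ᵢ ∈ qK` while `h' ∈ qH`, which the hypothesis forbids
unless `q` divides every `uᵢ`; but then `q` divides every coefficient of `(h', 0)`.
-/

open TensorProduct

/-- Handelman's intrinsic characterization of ultrasimpliciality, used as the
definition. -/
def IsUltrasimplicial {G : Type*} [AddCommGroup G] (pos : Set G) : Prop :=
  ∀ F : Finset G, ↑F ⊆ pos →
    ∃ S : Finset G, ↑S ⊆ pos ∧
      LinearIndependent ℤ (fun s : (S : Set G) => (s : G)) ∧
      ∀ f ∈ F, ∃ c : G → ℕ, f = ∑ s ∈ S, c s • s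

open Module Submodule Matrix

theorem rank_le_card_of_forall_smul_mem_span {R M ι : Type*} [CommRing R] [IsDomain R]
    [AddCommGroup M] [Module R M] [Fintype ι] (v : ι → M)
    (hv : ∀ x : M, ∃ c : R, c ≠ 0 ∧ c • x ∈ span R (Set.range v)) :
    Module.rank R M ≤ Fintype.card ι := by
  classical
  have htorsion : Module.rank R (M ⧸ span R (Set.range v)) = 0 := by
    refine rank_eq_zero_iff.mpr fun y => ?_
    induction y using Submodule.Quotient.induction_on with | _ x
    obtain ⟨c, hc, hmem⟩ := hv x
    exact ⟨c, hc, by rwa [← Submodule.Quotient.mk_smul, Submodule.Quotient.mk_eq_zero]⟩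
  rw [← rank_quotient_add_rank_of_isDomain, htorsion, zero_add]
  calc Module.rank R (span R (Set.range v))
      = Module.rank R (span R ((Finset.univ.image v : Finset M) : Set M)) := by
        rw [Finset.coe_image, Finset.coe_univ, Set.image_univ]
    _ ≤ (Finset.univ.image v).card := rank_span_finset_le _
    _ ≤ Fintype.card ι := by exact_mod_cast Finset.card_image_le

theorem card_le_card_of_linearIndependent_of_mem_span {R M κ : Type*} [Ring R]
    [StrongRankCondition R] [AddCommGroup M] [Module R M] [Fintype κ] {Y : κ → M}
    (hY : LinearIndependent R Y) (T : Finset M) (hT : ∀ k, Y k ∈ span R (T : Set M)) :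
    Fintype.card κ ≤ T.card := by
  have := linearIndependent_le_span' Y hY (T : Set M) (Set.range_subset_iff.mpr hT)
  simpa using this

theorem not_forall_smul_mem_span_of_isEmpty {R M ι : Type*} [Ring R] [AddCommGroup M]
    [Module R M] [NoZeroSMulDivisors R M] [Nontrivial M] [IsEmpty ι] (v : ι → M) :
    ¬ ∀ x : M, ∃ c : R, c ≠ 0 ∧ c • x ∈ span R (Set.range v) := fun hv => by
  obtain ⟨x, hx⟩ := exists_ne (0 : M)
  obtain ⟨c, hc, hmem⟩ := hv x
  simp only [Set.range_eq_empty, span_empty, mem_bot] at hmem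
  exact hx ((eq_zero_or_eq_zero_of_smul_eq_zero hmem).resolve_left hc)

theorem sum_sum_mul_smul_eq_sum_smul {R M ι κ : Type*} [CommSemiring R] [AddCommMonoid M]
    [Module R M] [Fintype κ] {S : Finset ι} {v : ι → M} {A : ι → κ → R} {Y : κ → M}
    (hA : ∀ k, ∑ x ∈ S, A x k • v x = Y k) (u : κ → R) :
    ∑ x ∈ S, (∑ k, A x k * u k) • v x = ∑ k, u k • Y k := by
  calc ∑ x ∈ S, (∑ k, A x k * u k) • v x = ∑ k, u k • ∑ x ∈ S, A x k • v x := by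
        simp_rw [Finset.sum_smul, Finset.smul_sum, mul_comm (A _ _), mul_smul]
        exact Finset.sum_comm
    _ = ∑ k, u k • Y k := by simp_rw [hA]

theorem Matrix.exists_mulVec_eq_zero_of_vecMul_eq_zero {K ι κ : Type*} [Field K] [Fintype ι]
    [Fintype κ] [DecidableEq ι] (hcard : Fintype.card ι = Fintype.card κ) {A : Matrix ι κ K}
    {m : ι → K} (hm : m ≠ 0) (hmA : m ᵥ* A = 0) : ∃ v ≠ 0, A *ᵥ v = 0 := by
  let e : ι ≃ κ := Fintype.equivOfCardEq hcard
  have hdet : (A.submatrix (Equiv.refl ι) e).det = 0 := by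
    refine Matrix.exists_vecMul_eq_zero_iff.mp ⟨m, hm, ?_⟩
    rw [Matrix.submatrix_vecMul_equiv]
    simp [hmA]
  obtain ⟨v, hv, hAv⟩ := Matrix.exists_mulVec_eq_zero_iff.mpr hdet
  refine ⟨v ∘ e.symm, fun h => hv ?_, ?_⟩
  · simpa [Function.comp_assoc] using congrArg (· ∘ e) h
  · simpa [Matrix.submatrix_mulVec_equiv] using hAv

theorem exists_not_dvd_forall_dvd_sum_mul {ι κ : Type*} [Fintype κ] {q : ℕ} (hq : q.Prime)
    {S : Finset ι} (hS : S.card = Fintype.card κ) (A : ι → κ → ℤ) {m : ι → ℤ}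
    (hm : ¬ ∀ x ∈ S, (q : ℤ) ∣ m x) (hmA : ∀ k, (q : ℤ) ∣ ∑ x ∈ S, m x * A x k) :
    ∃ u : κ → ℤ, (¬ ∀ k, (q : ℤ) ∣ u k) ∧ ∀ x ∈ S, (q : ℤ) ∣ ∑ k, A x k * u k := by
  classical
  have : Fact q.Prime := ⟨hq⟩
  simp_rw [← ZMod.intCast_zmod_eq_zero_iff_dvd] at hm hmA ⊢
  let M : Matrix S κ (ZMod q) := Matrix.of fun x k => A x k
  have hmM : (fun x : S => (m x : ZMod q)) ᵥ* M = 0 := funext fun k => by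
    simpa [M, Matrix.vecMul, dotProduct, Finset.sum_attach S (fun x => (m x * A x k : ZMod q))]
      using hmA k
  obtain ⟨v, hv, hMv⟩ := Matrix.exists_mulVec_eq_zero_of_vecMul_eq_zero (by simpa using hS)
    (fun h => hm fun x hx => congrFun h ⟨x, hx⟩) hmM
  refine ⟨fun k => (v k).val, fun h => hv (funext fun k => by simpa using h k), fun x hx => ?_⟩
  simpa [M, Matrix.mulVec, dotProduct] using congrFun hMv ⟨x, hx⟩

theorem Rat.exists_zsmul_eq_zsmul (a b : ℚ) (hb : b ≠ 0) :
    ∃ d e : ℤ, d ≠ 0 ∧ d • a = e • b := by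
  refine ⟨(a / b).den, (a / b).num, by simp, ?_⟩
  rw [zsmul_eq_mul, zsmul_eq_mul, ← Rat.mul_den_eq_num, Int.cast_natCast]
  field_simp

theorem Rat.exists_nat_mul_eq_intCast {α : Type*} (S : Finset α) (x : α → ℚ) :
    ∃ D : ℕ, 0 < D ∧ ∃ u : α → ℤ, ∀ a ∈ S, (u a : ℚ) = D * x a := by
  classical
  refine ⟨∏ a ∈ S, (x a).den, Finset.prod_pos fun a _ => (x a).pos,
    fun a => (x a).num * ∏ b ∈ S.erase a, (x b).den, fun a ha => ?_⟩
  rw [← Finset.mul_prod_erase S _ ha]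
  push_cast
  rw [← Rat.mul_den_eq_num]
  ring

theorem Finset.exists_eq_mul_primitive_of_pos {α : Type*} {S : Finset α} (hS : S.Nonempty)
    {u : α → ℤ} (hu : ∀ a ∈ S, 0 < u a) :
    ∃ g : ℤ, 0 < g ∧ ∃ m t : α → ℤ,
      (∀ a ∈ S, 0 < m a ∧ u a = g * m a) ∧ ∑ a ∈ S, m a * t a = 1 := by
  obtain ⟨t, ht⟩ := S.gcd_eq_sum_mul u
  obtain ⟨a₀, ha₀⟩ := hS
  have hg : 0 < S.gcd u := by
    refine lt_of_le_of_ne (Int.nonneg_of_normalize_eq_self S.normalize_gcd) fun h => ?_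
    exact (hu a₀ ha₀).ne' (Finset.gcd_eq_zero_iff.mp h.symm a₀ ha₀)
  have hdvd : ∀ a ∈ S, u a = S.gcd u * (u a / S.gcd u) :=
    fun a ha => (Int.mul_ediv_cancel' (Finset.gcd_dvd ha)).symm
  refine ⟨S.gcd u, hg, fun a => u a / S.gcd u, t, fun a ha => ⟨?_, hdvd a ha⟩, ?_⟩
  · have := hdvd a ha ▸ hu a ha
    exact pos_of_mul_pos_right this hg.le
  · refine mul_left_cancel₀ hg.ne' ?_
    calc S.gcd u * ∑ a ∈ S, u a / S.gcd u * t a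
        = ∑ a ∈ S, u a * t a := by
          rw [Finset.mul_sum]
          exact Finset.sum_congr rfl fun a ha => by rw [← mul_assoc, ← hdvd a ha]
      _ = S.gcd u * 1 := by rw [mul_one, ht]

theorem AddSubgroup.exists_zsmul_eq_of_pos {H : AddSubgroup ℚ} {α : Type*} {S : Finset α}
    (hS : S.Nonempty) {x : α → H} (hx : ∀ a ∈ S, 0 < (x a : ℚ)) :
    ∃ β : H, ∃ m t : α → ℤ, (∀ a ∈ S, 0 < m a ∧ x a = m a • β) ∧ ∑ a ∈ S, m a * t a = 1 := by
  obtain ⟨D, hD, u, hu⟩ := Rat.exists_nat_mul_eq_intCast S (fun a => (x a : ℚ))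
  have hupos : ∀ a ∈ S, 0 < u a := fun a ha => by
    have : (0 : ℚ) < u a := hu a ha ▸ mul_pos (by exact_mod_cast hD) (hx a ha)
    exact_mod_cast this
  obtain ⟨g, -, m, t, hm, hmt⟩ := Finset.exists_eq_mul_primitive_of_pos hS hupos
  refine ⟨∑ a ∈ S, t a • x a, m, t, fun a ha => ⟨(hm a ha).1, Subtype.ext ?_⟩, hmt⟩
  have hβ : (D : ℚ) * ((∑ a ∈ S, t a • x a : H) : ℚ) = g := by
    simp only [AddSubgroup.val_finsetSum, AddSubgroupClass.coe_zsmul, zsmul_eq_mul,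
      Finset.mul_sum]
    calc ∑ a ∈ S, (D : ℚ) * (t a * x a) = ∑ a ∈ S, ((g * (m a * t a) : ℤ) : ℚ) := by
          refine Finset.sum_congr rfl fun a ha => ?_
          rw [← mul_assoc g, ← (hm a ha).2, Int.cast_mul, hu a ha]
          ring
      _ = g := by rw [← Int.cast_sum, ← Finset.mul_sum, hmt, mul_one]
  have hD0 : (D : ℚ) ≠ 0 := by positivity
  refine mul_left_cancel₀ hD0 ?_
  rw [AddSubgroupClass.coe_zsmul, zsmul_eq_mul, mul_left_comm, hβ, ← hu a ha, (hm a ha).2]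
  push_cast
  ring

theorem not_isUltrasimplicial_of_finite {G : Type*} [AddCommGroup G] {pos F : Set G}
    (hF : F.Finite) (hFpos : F ⊆ pos)
    (hno : ¬ ∃ S : Finset G, ↑S ⊆ pos ∧ LinearIndependent ℤ (fun s : (S : Set G) => (s : G)) ∧
      ∀ f ∈ F, ∃ c : G → ℕ, f = ∑ s ∈ S, c s • s) :
    ¬ IsUltrasimplicial pos := fun hU => by
  obtain ⟨S, hSpos, hSind, hrep⟩ := hU hF.toFinset (by simpa using hFpos)
  exact hno ⟨S, hSpos, hSind, fun f hf => hrep f (hF.mem_toFinset.mpr hf)⟩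

section AxisFamily

variable {H : AddSubgroup ℚ} {K : Type*} [AddCommGroup K] {n : ℕ}

def axisFamily (h : H) (k' : Fin n → K) : Option (Fin n) → H × K
  | none => (h, 0)
  | some i => (0, k' i)

theorem sum_smul_axisFamily (h : H) (k' : Fin n → K) (u : Option (Fin n) → ℤ) :
    ∑ o, u o • axisFamily h k' o = (u none • h, ∑ i, u (some i) • k' i) := by
  simp [Fintype.sum_option, axisFamily, Prod.ext_iff, Prod.fst_sum, Prod.snd_sum]

theorem linearIndependent_axisFamily {h : H} (hh : h ≠ 0) {k' : Fin n → K}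
    (hind : LinearIndependent ℤ k') : LinearIndependent ℤ (axisFamily h k') := by
  refine Fintype.linearIndependent_iff.mpr fun u hu => ?_
  rw [sum_smul_axisFamily, Prod.mk_eq_zero] at hu
  rintro (_ | i)
  · exact (smul_eq_zero.mp hu.1).resolve_right hh
  · exact Fintype.linearIndependent_iff.mp hind _ hu.2 i

theorem exists_smul_mem_span_axisFamily {h : H} (hh : h ≠ 0) {k' : Fin n → K}
    (hmax : ∀ k : K, ∃ c : ℤ, c ≠ 0 ∧ c • k ∈ span ℤ (Set.range k')) (x : H × K) :
    ∃ c : ℤ, c ≠ 0 ∧ c • x ∈ span ℤ (Set.range (axisFamily h k')) := by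
  obtain ⟨c, hc, hck⟩ := hmax x.2
  obtain ⟨f, hf⟩ := mem_span_range_iff_exists_fun ℤ |>.mp hck
  obtain ⟨d, e, hd, hde⟩ := Rat.exists_zsmul_eq_zsmul (x.1 : ℚ) h (by simpa using hh)
  refine ⟨d * c, mul_ne_zero hd hc, mem_span_range_iff_exists_fun ℤ |>.mpr
    ⟨fun o => o.elim (c * e) (fun i => d * f i), ?_⟩⟩
  rw [sum_smul_axisFamily]
  refine Prod.ext (Subtype.ext ?_) ?_
  · simp only [Option.elim, AddSubgroupClass.coe_zsmul, Prod.smul_fst, mul_smul]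
    rw [← hde, smul_comm c d]
  · simp only [Option.elim, Prod.smul_snd, mul_smul, ← Finset.smul_sum, hf]

theorem card_le_add_one_of_linearIndependent {h : H} (hh : h ≠ 0) {k' : Fin n → K}
    (hmax : ∀ k : K, ∃ c : ℤ, c ≠ 0 ∧ c • k ∈ span ℤ (Set.range k')) {S : Finset (H × K)}
    (hS : LinearIndependent ℤ (fun s : (S : Set (H × K)) => (s : H × K))) : S.card ≤ n + 1 := by
  have : (S.card : Cardinal) ≤ (n + 1 : ℕ) := by
    simpa using hS.cardinal_le_rank.trans
      (rank_le_card_of_forall_smul_mem_span _ (exists_smul_mem_span_axisFamily hh hmax))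
  exact_mod_cast this

theorem exists_coeffs_axisFamily {h : H} {k' : Fin n → K} {S : Finset (H × K)}
    (hS : LinearIndependent ℤ (fun s : (S : Set (H × K)) => (s : H × K)))
    {c₀ : H × K → ℕ} {cₚ cₘ : Fin n → H × K → ℕ}
    (h₀ : ((h, 0) : H × K) = ∑ s ∈ S, c₀ s • s)
    (hₚ : ∀ i, ((h, k' i) : H × K) = ∑ s ∈ S, cₚ i s • s)
    (hₘ : ∀ i, ((h, -k' i) : H × K) = ∑ s ∈ S, cₘ i s • s) :
    ∃ A : H × K → Option (Fin n) → ℤ, (∀ o, ∑ x ∈ S, A x o • x = axisFamily h k' o) ∧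
      ∀ x ∈ S, 0 ≤ A x none ∧ (A x none = 0 → ∀ o, A x o = 0) := by
  have hsum : ∀ i, ∀ x ∈ S, (cₚ i x + cₘ i x : ℤ) = 2 * c₀ x := fun i =>
    (linearIndepOn_finset_iffₛ (v := id)).mp hS _ _ <| by
      simp only [id, add_smul, mul_smul, Finset.sum_add_distrib, ← Finset.smul_sum, natCast_zsmul,
        ← h₀, ← hₚ, ← hₘ]
      simp [two_smul]
  refine ⟨fun x o => o.elim (c₀ x) (fun i => cₚ i x - c₀ x), ?_, fun x hx => ⟨by simp, ?_⟩⟩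
  · rintro (_ | i)
    · simp [axisFamily, natCast_zsmul, ← h₀]
    · simp [axisFamily, sub_smul, Finset.sum_sub_distrib, natCast_zsmul, ← h₀, ← hₚ]
  · rintro h0 (_ | i)
    · exact h0
    · have := hsum i x hx
      simp only [Option.elim] at h0 ⊢
      omega

theorem card_eq_and_coeff_none_pos {h : H} (hh : h ≠ 0) {k' : Fin n → K}
    (hind : LinearIndependent ℤ k') {S : Finset (H × K)} (hcard : S.card ≤ n + 1)
    {A : H × K → Option (Fin n) → ℤ} (hA : ∀ o, ∑ x ∈ S, A x o • x = axisFamily h k' o)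
    (hA0 : ∀ x ∈ S, 0 ≤ A x none ∧ (A x none = 0 → ∀ o, A x o = 0)) :
    S.card = n + 1 ∧ ∀ x ∈ S, 0 < A x none := by
  classical
  set T := S.filter (fun x => A x none ≠ 0)
  have hT : ∀ o, axisFamily h k' o ∈ span ℤ (T : Set (H × K)) := fun o => by
    have hsupp : ∀ x ∈ S, A x o • x ≠ 0 → A x none ≠ 0 := fun x hx hne h0 =>
      hne (by simp [(hA0 x hx).2 h0 o])
    rw [← hA o, ← Finset.sum_filter_of_ne hsupp]
    exact Submodule.sum_mem _ fun x hx => Submodule.smul_mem _ _ (subset_span hx)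
  have hle := card_le_card_of_linearIndependent_of_mem_span
    (linearIndependent_axisFamily hh hind) T hT
  rw [Fintype.card_option, Fintype.card_fin] at hle
  have hTS : T = S := Finset.eq_of_subset_of_card_le (Finset.filter_subset _ _) (by omega)
  refine ⟨le_antisymm hcard (hle.trans (Finset.card_le_card (Finset.filter_subset _ _))),
    fun x hx => lt_of_le_of_ne (hA0 x hx).1 ?_⟩
  exact ((Finset.mem_filter.mp (hTS ▸ hx : x ∈ T)).2).symm

def DivisibilityCondition (h : H) (k' : Fin n → K) : Prop :=
  ∀ q : ℕ, q.Prime → ∀ c : Fin n → ℤ, ¬ ((q : ℤ) ∣ Finset.univ.gcd c) →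
    (∃ b : K, ∑ i, c i • k' i = (q : ℤ) • b) → ¬ ∃ b : H, h = q • b

theorem DivisibilityCondition.of_zsmul {g : ℤ} {h : H} {k' : Fin n → K}
    (hd : DivisibilityCondition (g • h) k') : DivisibilityCondition h k' :=
  fun q hq c hc hk ⟨b, hb⟩ => hd q hq c hc hk ⟨g • b, by rw [hb, smul_comm]⟩

theorem not_divisibilityCondition_of_dvd_sum_mul {q : ℕ} (hq : q.Prime) {h : H}
    {k' : Fin n → K} (hhq : ∃ b : H, h = q • b) {S : Finset (H × K)}
    {A : H × K → Option (Fin n) → ℤ} (hA : ∀ o, ∑ x ∈ S, A x o • x = axisFamily h k' o)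
    {t : H × K → ℤ} (ht : ∑ x ∈ S, A x none * t x = 1) {u : Option (Fin n) → ℤ}
    (hu : ¬ ∀ o, (q : ℤ) ∣ u o) (hAu : ∀ x ∈ S, (q : ℤ) ∣ ∑ o, A x o * u o) :
    ¬ DivisibilityCondition h k' := fun hdiv => by
  have hq' : Prime (q : ℤ) := Nat.prime_iff_prime_int.mp hq
  by_cases hsome : ∀ i, (q : ℤ) ∣ u (some i)
  · have hnone : ¬ (q : ℤ) ∣ u none := fun hn => hu (by rintro (_ | i); exacts [hn, hsome i])
    have hcol : ∀ x ∈ S, (q : ℤ) ∣ A x none := fun x hx => by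
      have hx := hAu x hx
      rw [Fintype.sum_option] at hx
      have hrest : (q : ℤ) ∣ ∑ i, A x (some i) * u (some i) :=
        Finset.dvd_sum fun i _ => dvd_mul_of_dvd_right (hsome i) _
      exact (hq'.dvd_or_dvd ((dvd_add_left hrest).mp hx)).resolve_right hnone
    exact hq'.not_dvd_one (ht ▸ Finset.dvd_sum fun x hx => dvd_mul_of_dvd_left (hcol x hx) _)
  · have hgcd : ¬ (q : ℤ) ∣ Finset.univ.gcd (fun i => u (some i)) := fun hg =>
      hsome fun i => hg.trans (Finset.gcd_dvd (Finset.mem_univ i))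
    refine hdiv q hq _ hgcd ⟨(∑ x ∈ S, ((∑ o, A x o * u o) / q) • x).2, ?_⟩ hhq
    have hK := congrArg Prod.snd (sum_sum_mul_smul_eq_sum_smul hA u)
    rw [sum_smul_axisFamily] at hK
    rw [show ∑ i, u (some i) • k' i = _ from hK.symm, ← Prod.smul_snd, Finset.smul_sum]
    refine congrArg Prod.snd (Finset.sum_congr rfl fun x hx => ?_)
    rw [smul_smul, Int.mul_ediv_cancel' (hAu x hx)]

theorem not_divisibilityCondition_of_coprime_coeffs (hn : n ≠ 0) {h : H} {k' : Fin n → K}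
    {S : Finset (H × K)} (hcard : S.card = n + 1) (hS : ∀ x ∈ S, 0 < (x.1 : ℚ))
    {A : H × K → Option (Fin n) → ℤ} (hA : ∀ o, ∑ x ∈ S, A x o • x = axisFamily h k' o)
    (hA0 : ∀ x ∈ S, 0 < A x none) {t : H × K → ℤ} (ht : ∑ x ∈ S, A x none * t x = 1) :
    ¬ DivisibilityCondition h k' := by
  obtain ⟨x₀, hx₀⟩ : S.Nonempty := Finset.card_pos.mp (by omega)
  obtain ⟨β, m, t', hm, hmt'⟩ := AddSubgroup.exists_zsmul_eq_of_pos ⟨x₀, hx₀⟩ hS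
  have hfst : ∀ o, (∑ x ∈ S, m x * A x o) • β = (axisFamily h k' o).1 := fun o => by
    rw [← hA o, Prod.fst_sum, Finset.sum_smul]
    refine Finset.sum_congr rfl fun x hx => ?_
    rw [Prod.smul_fst, (hm x hx).2, smul_smul, mul_comm]
  have hβ : β ≠ 0 := fun hβ => by simpa [(hm x₀ hx₀).2, hβ] using hS x₀ hx₀
  set w := ∑ x ∈ S, m x * A x none
  have hw : 2 ≤ w := calc
    (2 : ℤ) ≤ ∑ x ∈ S, 1 := by rw [Finset.sum_const, hcard, nsmul_one]; push_cast; omega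
    _ ≤ w := Finset.sum_le_sum fun x hx => one_le_mul_of_one_le_of_one_le (hm x hx).1 (hA0 x hx)
  obtain ⟨q, hq, hqw⟩ : ∃ q : ℕ, q.Prime ∧ (q : ℤ) ∣ w :=
    ⟨w.natAbs.minFac, Nat.minFac_prime (by omega), Int.ofNat_dvd_left.mpr (Nat.minFac_dvd _)⟩
  have hrow : ∀ o, (q : ℤ) ∣ ∑ x ∈ S, m x * A x o := by
    rintro (_ | i)
    · exact hqw
    · have := hfst (some i)
      simp only [axisFamily, smul_eq_zero, hβ, or_false] at this
      simp [this]
  have hm_not : ¬ ∀ x ∈ S, (q : ℤ) ∣ m x := fun hdvd =>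
    (Nat.prime_iff_prime_int.mp hq).not_dvd_one
      (hmt' ▸ Finset.dvd_sum fun x hx => dvd_mul_of_dvd_left (hdvd x hx) _)
  obtain ⟨u, hu, hAu⟩ := exists_not_dvd_forall_dvd_sum_mul hq (by simp [hcard]) A hm_not hrow
  refine not_divisibilityCondition_of_dvd_sum_mul hq ⟨(w / q) • β, ?_⟩ hA ht hu hAu
  rw [← natCast_zsmul, smul_smul, Int.mul_ediv_cancel' hqw, hfst none]
  rfl

theorem not_divisibilityCondition_of_pos_coeffs [NoZeroSMulDivisors ℤ K] (hn : n ≠ 0) {h : H}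
    {k' : Fin n → K} {S : Finset (H × K)} (hcard : S.card = n + 1) (hS : ∀ x ∈ S, 0 < (x.1 : ℚ))
    {A : H × K → Option (Fin n) → ℤ} (hA : ∀ o, ∑ x ∈ S, A x o • x = axisFamily h k' o)
    (hA0 : ∀ x ∈ S, 0 < A x none) : ¬ DivisibilityCondition h k' := fun hdiv => by
  obtain ⟨g, hg, c, t, hc, hct⟩ :=
    Finset.exists_eq_mul_primitive_of_pos (Finset.card_pos.mp (by omega)) hA0
  have hsum : g • ∑ x ∈ S, c x • x = (h, 0) := by
    change _ = axisFamily h k' none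
    rw [← hA none, Finset.smul_sum]
    exact Finset.sum_congr rfl fun x hx => by rw [smul_smul, ← (hc x hx).2]
  have hK : (∑ x ∈ S, c x • x).2 = 0 :=
    (eq_zero_or_eq_zero_of_smul_eq_zero (congrArg Prod.snd hsum)).resolve_left hg.ne'
  refine not_divisibilityCondition_of_coprime_coeffs hn (h := (∑ x ∈ S, c x • x).1) hcard hS
    (A := fun x o => o.elim (c x) (fun i => A x (some i))) ?_ (fun x hx => (hc x hx).1) hct
    (.of_zsmul (g := g) (by rwa [← Prod.smul_fst, hsum]))
  rintro (_ | i)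
  · exact Prod.ext rfl hK
  · exact hA (some i)

theorem not_exists_linearIndependent_sum_eq [NoZeroSMulDivisors ℤ K] (hn : n ≠ 0)
    {k' : Fin n → K} (hind : LinearIndependent ℤ k')
    (hmax : ∀ k : K, ∃ c : ℤ, c ≠ 0 ∧ c • k ∈ span ℤ (Set.range k'))
    {h : H} (hh : 0 < (h : ℚ)) (hdiv : DivisibilityCondition h k') :
    ¬ ∃ S : Finset (H × K),
        ↑S ⊆ ({g : H × K | 0 < (g.1 : ℚ)} ∪ {0} : Set (H × K)) ∧
        LinearIndependent ℤ (fun s : (S : Set (H × K)) => (s : H × K)) ∧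
        ∀ f ∈ ({((h : H), (0 : K))} ∪ (Set.range fun i : Fin n => ((h : H), k' i)) ∪
            (Set.range fun i : Fin n => ((h : H), -(k' i))) : Set (H × K)),
          ∃ c : H × K → ℕ, f = ∑ s ∈ S, c s • s := by
  rintro ⟨S, hSpos, hSind, hrep⟩
  obtain ⟨c₀, h₀⟩ := hrep _ (Or.inl (Or.inl rfl))
  choose cₚ hₚ using fun i => hrep _ (Or.inl (Or.inr ⟨i, rfl⟩))
  choose cₘ hₘ using fun i => hrep _ (Or.inr ⟨i, rfl⟩)
  have hh0 : h ≠ 0 := by rintro rfl; simp at hh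
  obtain ⟨A, hA, hA0⟩ := exists_coeffs_axisFamily hSind h₀ hₚ hₘ
  obtain ⟨hcard, hApos⟩ :=
    card_eq_and_coeff_none_pos hh0 hind (card_le_add_one_of_linearIndependent hh0 hmax hSind) hA hA0
  refine not_divisibilityCondition_of_pos_coeffs hn hcard (fun x hx => ?_) hA hApos hdiv
  rcases hSpos hx with hpos | hzero
  · exact hpos
  · exact absurd (Set.mem_singleton_iff.mp hzero) (hSind.ne_zero ⟨x, hx⟩)

end AxisFamily

theorem statement1_general
    (H : AddSubgroup ℚ)
    (K : Type*) [AddCommGroup K] [NoZeroSMulDivisors ℤ K] [Nontrivial K]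
    (n : ℕ) (k' : Fin n → K)
    (hind : LinearIndependent ℤ k')
    (hmax : ∀ k : K, ∃ c : ℤ, c ≠ 0 ∧ c • k ∈ Submodule.span ℤ (Set.range k'))
    (h' : H) (hh' : 0 < (h' : ℚ))
    (hdiv : ∀ q : ℕ, q.Prime → ∀ c : Fin n → ℤ, ¬ ((q : ℤ) ∣ Finset.univ.gcd c) →
      (∃ b : K, ∑ i, c i • k' i = (q : ℤ) • b) → ¬ ∃ b : H, h' = q • b) :
    ¬ IsUltrasimplicial ({g : H × K | 0 < (g.1 : ℚ)} ∪ {0}) ∧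
    ¬ ∃ S : Finset (H × K),
        ↑S ⊆ ({g : H × K | 0 < (g.1 : ℚ)} ∪ {0} : Set (H × K)) ∧
        LinearIndependent ℤ (fun s : (S : Set (H × K)) => (s : H × K)) ∧
        ∀ f ∈ ({((h' : H), (0 : K))} ∪ (Set.range fun i : Fin n => ((h' : H), k' i)) ∪
            (Set.range fun i : Fin n => ((h' : H), -(k' i))) : Set (H × K)),
          ∃ c : H × K → ℕ, f = ∑ s ∈ S, c s • s := by
  have hn : n ≠ 0 := by
    rintro rfl
    exact not_forall_smul_mem_span_of_isEmpty k' hmax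
  have hS := not_exists_linearIndependent_sum_eq hn hind hmax hh' hdiv
  refine ⟨not_isUltrasimplicial_of_finite (Set.toFinite _) ?_ hS, hS⟩
  rintro _ ((rfl | ⟨i, rfl⟩) | ⟨i, rfl⟩) <;> exact Or.inl hh'

/-- Necessary condition: if there is a maximal independent family `k'` in `K`
and a positive `h' ∈ H` such that for every prime `p` and integers `c i` with
`p ∤ gcd c`, divisibility of `∑ c i • k' i` by `p` in `K` forces `h'` not to be
divisible by `p` in `H`, then `G = H ⊕ K` is not ultrasimplicial; more
precisely, no finite `ℤ`-linearly independent subset of the positive cone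
generates the `2n+1` elements `(h',0), (h', ±k'ᵢ)` with nonnegative integer
coefficients. -/
theorem statement1
    (H : AddSubgroup ℚ) (hH : H ≠ ⊥)
    (K : Type*) [AddCommGroup K] [NoZeroSMulDivisors ℤ K] [Nontrivial K]
    [Module.Finite ℚ (ℚ ⊗[ℤ] K)]
    (n : ℕ) (k' : Fin n → K)
    (hind : LinearIndependent ℤ k')
    (hmax : ∀ k : K, ∃ c : ℤ, c ≠ 0 ∧ c • k ∈ Submodule.span ℤ (Set.range k'))
    (h' : H) (hh' : 0 < (h' : ℚ))
    (hdiv : ∀ q : ℕ, q.Prime → ∀ c : Fin n → ℤ, ¬ ((q : ℤ) ∣ Finset.univ.gcd c) →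
      (∃ b : K, ∑ i, c i • k' i = (q : ℤ) • b) → ¬ ∃ b : H, h' = q • b) :
    ¬ IsUltrasimplicial ({g : H × K | 0 < (g.1 : ℚ)} ∪ {0}) ∧
    ¬ ∃ S : Finset (H × K),
        ↑S ⊆ ({g : H × K | 0 < (g.1 : ℚ)} ∪ {0} : Set (H × K)) ∧
        LinearIndependent ℤ (fun s : (S : Set (H × K)) => (s : H × K)) ∧
        ∀ f ∈ ({((h' : H), (0 : K))} ∪ (Set.range fun i : Fin n => ((h' : H), k' i)) ∪
            (Set.range fun i : Fin n => ((h' : H), -(k' i))) : Set (H × K)),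
          ∃ c : H × K → ℕ, f = ∑ s ∈ S, c s • s :=
  statement1_general H K n k' hind hmax h' hh' hdiv
end

section
/- Let n ≥ 1 and let b₀, b₁, …, b_n be integers with b₀ > 0. Then there exists L ∈ ℕ with the following property: whenever M₁, …, M_n, M₁′, …, M_n′ are positive integers, all greater than L, satisfying Mⱼ′ ≤ 2Mᵢ′ for all 1 ≤ i, j ≤ n, and M is the (n+1)×(n+1) matrix (rows and columns indexed 0, …, n) with M₀ⱼ = 1 for all j, Mᵢ₀ = −Mᵢ′ and Mᵢᵢ = Mᵢ for 1 ≤ i ≤ n, and all other entries 0, then M is invertible over ℚ and the unique solution X = (x₀, …, x_n) ∈ ℚ^{n+1} of the equation M·X = (b₀, …, b_n)ᵗ has all entries xᵢ ≥ 0. -/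
lemma aux_rows (n : ℕ) (m m' : Fin n → ℚ) (X c : Fin (n + 1) → ℚ)
    (h : (Matrix.of fun i j : Fin (n + 1) =>
        if hi : i = 0 then (1 : ℚ)
        else if j = 0 then -(m' (i.pred hi))
        else if i = j then m (i.pred hi)
        else 0).mulVec X = c) :
    (X 0 + ∑ i : Fin n, X i.succ = c 0) ∧
    ∀ i : Fin n, -(m' i) * X 0 + m i * X i.succ = c i.succ := by
  constructor
  · have h0 := congrFun h 0
    simp [Matrix.mulVec, dotProduct, Fin.sum_univ_succ] at h0
    simpa [Fin.sum_univ_succ] using h0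
  · intro i
    have hi := congrFun h i.succ
    simp [Matrix.mulVec, dotProduct, Fin.sum_univ_succ, Fin.succ_ne_zero,
      Fin.succ_inj] at hi
    simpa using hi

lemma aux_solve (n : ℕ) (m m' : Fin n → ℚ) (hm : ∀ i, m i ≠ 0) (X c : Fin (n + 1) → ℚ)
    (h0 : X 0 + ∑ i : Fin n, X i.succ = c 0)
    (hrow : ∀ i : Fin n, -(m' i) * X 0 + m i * X i.succ = c i.succ) :
    X 0 * (1 + ∑ i : Fin n, m' i / m i) = c 0 - ∑ i : Fin n, c i.succ / m i := by
  have each : ∀ i : Fin n, X 0 * (m' i / m i) = X i.succ - c i.succ / m i := by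
    intro i
    have h : X i.succ = (c i.succ + m' i * X 0) / m i := by
      rw [eq_div_iff (hm i)]; linarith [hrow i]
    rw [h]; field_simp; ring
  calc X 0 * (1 + ∑ i : Fin n, m' i / m i)
      = X 0 + ∑ i : Fin n, X 0 * (m' i / m i) := by rw [mul_add, mul_one, Finset.mul_sum]
    _ = X 0 + ∑ i : Fin n, (X i.succ - c i.succ / m i) :=
        congrArg _ (Finset.sum_congr rfl fun i _ => each i)
    _ = (X 0 + ∑ i : Fin n, X i.succ) - ∑ i : Fin n, c i.succ / m i := by
        rw [Finset.sum_sub_distrib]; ring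
    _ = c 0 - ∑ i : Fin n, c i.succ / m i := by rw [h0]

/-- If the positive integers `Mᵢ, Mᵢ'` are all sufficiently large (depending on
the integer vector `b` with `b 0 > 0`) and satisfy `Mⱼ' ≤ 2 Mᵢ'` for all
`i, j`, then the bordered diagonal matrix `M` is invertible over `ℚ` and the
unique rational solution of `M · X = b` has all entries nonnegative. -/
theorem statement4 (n : ℕ) (hn : 1 ≤ n) (b : Fin (n + 1) → ℤ) (hb : 0 < b 0) :
    ∃ L : ℕ, ∀ M M' : Fin n → ℤ,
      (∀ i, (L : ℤ) < M i) → (∀ i, (L : ℤ) < M' i) →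
      (∀ i j, M' j ≤ 2 * M' i) →
      IsUnit ((Matrix.of fun i j : Fin (n + 1) =>
          if hi : i = 0 then (1 : ℚ)
          else if j = 0 then -((M' (i.pred hi) : ℚ))
          else if i = j then (M (i.pred hi) : ℚ)
          else 0).det) ∧
      ∀ X : Fin (n + 1) → ℚ,
        (Matrix.of fun i j : Fin (n + 1) =>
            if hi : i = 0 then (1 : ℚ)
            else if j = 0 then -((M' (i.pred hi) : ℚ))
            else if i = j then (M (i.pred hi) : ℚ)
            else 0).mulVec X = (fun i => (b i : ℚ)) →
        ∀ i, 0 ≤ X i := by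
  classical
  set B : ℤ := ∑ i : Fin (n + 1), |b i| with hBdef
  have hB1 : 1 ≤ B :=
    le_trans hb (le_trans (le_abs_self _)
      (Finset.single_le_sum (fun i _ => abs_nonneg (b i)) (Finset.mem_univ 0)))
  refine ⟨((4 * n + 2) * B).toNat, fun M M' hM hM' hMM' => ?_⟩
  have hLZ : ((((4 * n + 2) * B).toNat : ℤ)) = (4 * n + 2) * B :=
    Int.toNat_of_nonneg (by positivity)
  set m : Fin n → ℚ := fun i => (M i : ℚ) with hmdef
  set m' : Fin n → ℚ := fun i => (M' i : ℚ) with hm'def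
  set BQ : ℚ := (B : ℚ) with hBQdef
  set LQ : ℚ := (4 * n + 2) * BQ with hLQdef
  have hBQ1 : 1 ≤ BQ := by rw [hBQdef]; exact_mod_cast hB1
  have hBQ0 : BQ ≠ 0 := by linarith
  have hLQpos : 0 < LQ := by rw [hLQdef]; positivity
  have hMQ : ∀ i, LQ < m i := by
    intro i
    have h := hM i
    rw [hLZ] at h
    have h2 : ((4 * n + 2) * B : ℚ) < (M i : ℚ) := by exact_mod_cast h
    rw [hLQdef, hBQdef, hmdef]
    push_cast
    push_cast at h2
    linarith
  have hM'Q : ∀ i, LQ < m' i := by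
    intro i
    have h := hM' i
    rw [hLZ] at h
    have h2 : ((4 * n + 2) * B : ℚ) < (M' i : ℚ) := by exact_mod_cast h
    rw [hLQdef, hBQdef, hm'def]
    push_cast
    push_cast at h2
    linarith
  have hmpos : ∀ i, 0 < m i := fun i => lt_trans hLQpos (hMQ i)
  have hm'pos : ∀ i, 0 < m' i := fun i => lt_trans hLQpos (hM'Q i)
  have hm0 : ∀ i, m i ≠ 0 := fun i => ne_of_gt (hmpos i)
  have hMM'Q : ∀ i j, m' j ≤ 2 * m' i := by
    intro i j
    have h : ((M' j : ℚ)) ≤ 2 * ((M' i : ℚ)) := by exact_mod_cast hMM' i j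
    exact h
  set D : ℚ := 1 + ∑ i : Fin n, m' i / m i with hDdef
  have hD : 0 < D := by
    have h : 0 ≤ ∑ i : Fin n, m' i / m i :=
      Finset.sum_nonneg fun i _ => le_of_lt (div_pos (hm'pos i) (hmpos i))
    rw [hDdef]; linarith
  have habs : ∀ i : Fin (n + 1), |(b i : ℚ)| ≤ BQ := by
    intro i
    have h : |b i| ≤ B :=
      Finset.single_le_sum (fun i _ => abs_nonneg (b i)) (Finset.mem_univ i)
    rw [hBQdef]
    exact_mod_cast h
  constructor
  · -- invertibility
    rw [← Matrix.isUnit_iff_isUnit_det, ← Matrix.mulVec_injective_iff_isUnit]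
    intro X Y hXY
    have hz : (Matrix.of fun i j : Fin (n + 1) =>
        if hi : i = 0 then (1 : ℚ)
        else if j = 0 then -((M' (i.pred hi) : ℚ))
        else if i = j then (M (i.pred hi) : ℚ)
        else 0).mulVec (X - Y) = (fun _ => (0 : ℚ)) := by
      funext k
      have h := congrFun hXY k
      simp [Matrix.mulVec_sub, h]
    obtain ⟨h0, hrow⟩ := aux_rows n m m' (X - Y) (fun _ => 0) hz
    have hsolve : (X - Y) 0 * D = (0 : ℚ) - ∑ i : Fin n, (0 : ℚ) / m i :=
      aux_solve n m m' hm0 (X - Y) (fun _ => 0) h0 hrow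
    have hsolve' : (X - Y) 0 * D = 0 := by
      rw [hsolve]; simp
    have hz0 : (X - Y) 0 = 0 :=
      (mul_eq_zero.mp hsolve').resolve_right (ne_of_gt hD)
    have hzall : ∀ k, (X - Y) k = 0 := by
      intro k
      induction k using Fin.cases with
      | zero => exact hz0
      | succ i =>
        have h : -(m' i) * (X - Y) 0 + m i * (X - Y) i.succ = (0 : ℚ) := hrow i
        rw [hz0] at h
        have h2 : m i * (X - Y) i.succ = 0 := by linarith
        exact (mul_eq_zero.mp h2).resolve_left (hm0 i)
    exact sub_eq_zero.mp (funext hzall)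
  · -- nonnegativity
    intro X hX
    obtain ⟨h0, hrow⟩ := aux_rows n m m' X (fun i => (b i : ℚ)) hX
    set S : ℚ := ∑ i : Fin n, (b i.succ : ℚ) / m i with hSdef
    have hsolve : X 0 * D = (b 0 : ℚ) - S :=
      aux_solve n m m' hm0 X (fun i => (b i : ℚ)) h0 hrow
    have hBLQ : BQ / LQ = 1 / (4 * n + 2) := by
      rw [div_eq_div_iff (ne_of_gt hLQpos) (by positivity), hLQdef]
      ring
    have hS : S ≤ 1 / 2 := by
      have step : ∀ i : Fin n, (b i.succ : ℚ) / m i ≤ BQ / LQ := fun i =>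
        div_le_div₀ (by linarith) (le_trans (le_abs_self _) (habs i.succ)) hLQpos
          (le_of_lt (hMQ i))
      have h1 : S ≤ ∑ _i : Fin n, BQ / LQ := Finset.sum_le_sum fun i _ => step i
      have h2 : ∑ _i : Fin n, BQ / LQ = (n : ℚ) * (BQ / LQ) := by
        rw [Finset.sum_const, Finset.card_univ, Fintype.card_fin, nsmul_eq_mul]
      have h3 : (n : ℚ) * (BQ / LQ) ≤ 1 / 2 := by
        rw [hBLQ, mul_one_div, div_le_div_iff₀ (by positivity) (by norm_num)]
        push_cast
        linarith
      rw [hSdef] at h1 ⊢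
      linarith
    have hb0 : (1 : ℚ) ≤ (b 0 : ℚ) := by exact_mod_cast hb
    have hN : 1 / 2 ≤ (b 0 : ℚ) - S := by linarith
    have hX0 : 0 ≤ X 0 := by
      have hx : X 0 = ((b 0 : ℚ) - S) / D := (eq_div_iff (ne_of_gt hD)).mpr hsolve
      rw [hx]
      exact div_nonneg (by linarith) hD.le
    have hBX0 : ∀ i : Fin n, BQ ≤ m' i * X 0 := by
      intro i
      have hterm : ∀ j : Fin n, m' j / m j ≤ 2 * m' i / LQ := fun j =>
        div_le_div₀ (by linarith [hm'pos i]) (hMM'Q i j) hLQpos (le_of_lt (hMQ j))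
      have hsum : ∑ j : Fin n, m' j / m j ≤ (n : ℚ) * (2 * m' i / LQ) := by
        calc ∑ j : Fin n, m' j / m j ≤ ∑ _j : Fin n, 2 * m' i / LQ :=
              Finset.sum_le_sum fun j _ => hterm j
          _ = (n : ℚ) * (2 * m' i / LQ) := by
              rw [Finset.sum_const, Finset.card_univ, Fintype.card_fin, nsmul_eq_mul]
      have hone : 1 ≤ m' i / LQ := (one_le_div hLQpos).2 (le_of_lt (hM'Q i))
      have hDle : D ≤ (2 * n + 1) * m' i / LQ := by
        have heq : m' i / LQ + (n : ℚ) * (2 * m' i / LQ) = (2 * n + 1) * m' i / LQ := by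
          field_simp
          ring
        rw [hDdef]
        linarith
      have hhalf : BQ * ((2 * n + 1) * m' i / LQ) = m' i / 2 := by
        rw [hLQdef]
        field_simp
        ring
      have h1 : BQ * D ≤ BQ * ((2 * n + 1) * m' i / LQ) :=
        mul_le_mul_of_nonneg_left hDle (by linarith)
      have h2 : m' i / 2 ≤ m' i * ((b 0 : ℚ) - S) := by
        have h := mul_le_mul_of_nonneg_left hN (hm'pos i).le
        linarith
      have h3 : m' i * X 0 * D = m' i * ((b 0 : ℚ) - S) := by rw [← hsolve]; ring
      have h4 : BQ * D ≤ m' i * X 0 * D :=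
        calc BQ * D ≤ BQ * ((2 * n + 1) * m' i / LQ) := h1
          _ = m' i / 2 := hhalf
          _ ≤ m' i * ((b 0 : ℚ) - S) := h2
          _ = m' i * X 0 * D := h3.symm
      exact le_of_mul_le_mul_right h4 hD
    intro k
    induction k using Fin.cases with
    | zero => exact hX0
    | succ j =>
      have h : -(m' j) * X 0 + m j * X j.succ = (b j.succ : ℚ) := hrow j
      have hlow : -BQ ≤ (b j.succ : ℚ) := by linarith [neg_abs_le ((b j.succ : ℚ)), habs j.succ]
      have hnn : 0 ≤ m j * X j.succ := by linarith [hBX0 j]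
      have heq : X j.succ = m j * X j.succ / m j := (mul_div_cancel_left₀ _ (hm0 j)).symm
      rw [heq]
      exact div_nonneg hnn (hmpos j).le
end

section
/- Let p₁, p₂, … be an infinite sequence of (not necessarily distinct) prime numbers, and for N ∈ ℕ let P_N = ∏_{i=1}^N pᵢ. Let L ∈ ℕ and n ≥ 1. Then there exist N ∈ ℕ and positive integers M₁, …, M_n, M₁′, …, M_n′, all greater than L, with Mⱼ′ ≤ 2Mᵢ′ for all 1 ≤ i, j ≤ n, such that P_N = ∏_{i=1}^n Mᵢ + Σ_{i=1}^n Mᵢ′ ∏_{j≠i} Mⱼ. -/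
/-!
Cut the primes into consecutive blocks of length `L + 1` and let `Mᵢ` be the product of the
`i`-th block, so each `Mᵢ ≥ 2 ^ (L + 1) > L` and `P = ∏ Mᵢ` is a partial product.  Writing
`Qᵢ = P / Mᵢ` and `M'ᵢ = mᵢ Mᵢ`, the target identity `P R = P + ∑ M'ᵢ Qᵢ` becomes
`∑ mᵢ = R - 1`.  For the product `R` of a further long block of primes, divide
`R - 1 = t S + r` by `S = ∑ Qᵢ` and take `mᵢ = t Qᵢ`, adding the remainder `r` to one index:
then `M'ᵢ = t P`, except for one `M'` which is `t P + r M₀`, and `r M₀ ≤ t P` once `R` is large.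
-/

open Finset

theorem Finset.prod_range_mul_eq_prod_prod {M : Type*} [CommMonoid M] (f : ℕ → M) (m b : ℕ) :
    ∏ j ∈ range (m * b), f j = ∏ k ∈ range m, ∏ j ∈ range b, f (k * b + j) := by
  induction m with
  | zero => simp
  | succ m ih => rw [Nat.succ_mul, prod_range_add, ih, prod_range_succ]

theorem two_pow_le_prod_range_of_prime {p : ℕ → ℕ} (hp : ∀ i, (p i).Prime) (a c : ℕ) :
    2 ^ c ≤ ∏ j ∈ range c, p (a + j) := by
  simpa using pow_card_le_prod (range c) (fun j => p (a + j)) 2 fun j _ => (hp _).two_le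

theorem Finset.sum_mul_mul_prod_erase {ι R : Type*} [CommSemiring R] [DecidableEq ι]
    (s : Finset ι) (m M : ι → R) :
    ∑ i ∈ s, m i * M i * ∏ j ∈ s.erase i, M j = (∑ i ∈ s, m i) * ∏ i ∈ s, M i := by
  rw [sum_mul]
  refine sum_congr rfl fun i hi => ?_
  rw [mul_assoc, mul_prod_erase s M hi]

theorem exists_balanced_prod_mul_eq {ι : Type*} [Fintype ι] [DecidableEq ι] (M : ι → ℕ)
    (hM : ∀ i, 0 < M i) (i₀ : ι) (R : ℕ)
    (hR : (∑ i, ∏ j ∈ univ.erase i, M j) ^ 2 * M i₀ < R) :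
    ∃ M' : ι → ℕ, (∀ i, ∏ j, M j ≤ M' i) ∧ (∀ i j, M' j ≤ 2 * M' i) ∧
      (∏ i, M i) * R = ∏ i, M i + ∑ i, M' i * ∏ j ∈ univ.erase i, M j := by
  set P := ∏ i, M i
  set Q : ι → ℕ := fun i => ∏ j ∈ univ.erase i, M j
  set S := ∑ i, Q i
  have hP : 0 < P := prod_pos fun i _ => hM i
  have hS : 0 < S := (prod_pos fun j _ => hM j).trans_le (single_le_sum (f := Q)
    (fun i _ => Nat.zero_le _) (mem_univ i₀))
  set t := (R - 1) / S
  set r := (R - 1) % S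
  have hdiv : S * t + r = R - 1 := Nat.div_add_mod (R - 1) S
  have ht : S * M i₀ ≤ t := by
    rw [Nat.le_div_iff_mul_le hS]
    have : S * M i₀ * S = S ^ 2 * M i₀ := by ring
    omega
  have hrM : r * M i₀ ≤ t * P :=
    calc r * M i₀ ≤ S * M i₀ := Nat.mul_le_mul_right _ (Nat.mod_lt _ hS).le
      _ ≤ t := ht
      _ ≤ t * P := Nat.le_mul_of_pos_right t hP
  have htP : P ≤ t * P :=
    Nat.le_mul_of_pos_left P ((Nat.mul_pos hS (hM i₀)).trans_le ht)
  let m : ι → ℕ := fun i => t * Q i + if i = i₀ then r else 0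
  have hm : ∑ i, m i = R - 1 := by
    simp only [m, sum_add_distrib, ← mul_sum, sum_ite_eq', mem_univ, if_true]
    rw [mul_comm, hdiv]
  have hM' : ∀ i, m i * M i = t * P + if i = i₀ then r * M i₀ else 0 := fun i => by
    simp only [m, add_mul, mul_assoc, Q, mul_comm (∏ j ∈ univ.erase i, M j),
      mul_prod_erase univ M (mem_univ i)]
    split_ifs with h <;> simp [h, P]
  refine ⟨fun i => m i * M i, fun i => ?_, fun i j => ?_, ?_⟩
  · dsimp only
    rw [hM']
    omega
  · dsimp only
    rw [hM', hM']
    split_ifs <;> omega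
  · rw [sum_mul_mul_prod_erase, hm]
    change P * R = P + (R - 1) * P
    obtain ⟨R, rfl⟩ : ∃ R', R = R' + 1 := ⟨R - 1, by omega⟩
    rw [Nat.add_sub_cancel]
    ring

/-- Factorization lemma: given an infinite sequence of (possibly repeated)
primes, some partial product `P_N = p₁ ⋯ p_N` can be written in the form
`∏ Mᵢ + ∑ Mᵢ' ∏_{j ≠ i} Mⱼ` with all `Mᵢ, Mᵢ' > L` and `Mⱼ' ≤ 2 Mᵢ'` for all
`i, j`. -/
theorem statement5 (p : ℕ → ℕ) (hp : ∀ i, (p i).Prime) (L : ℕ) (n : ℕ)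
    (hn : 1 ≤ n) :
    ∃ (N : ℕ) (M M' : Fin n → ℕ),
      (∀ i, L < M i) ∧ (∀ i, L < M' i) ∧
      (∀ i j, M' j ≤ 2 * M' i) ∧
      ∏ i ∈ Finset.range N, p i
        = ∏ i, M i + ∑ i, M' i * ∏ j ∈ Finset.univ.erase i, M j := by
  set b := L + 1
  let M : Fin n → ℕ := fun i => ∏ j ∈ range b, p (i * b + j)
  have hLM : ∀ i, L < M i := fun i =>
    (Nat.lt_two_pow_self.trans_le (Nat.pow_le_pow_right two_pos L.le_succ)).trans_le
      (two_pow_le_prod_range_of_prime hp _ b)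
  let i₀ : Fin n := ⟨0, hn⟩
  set B := (∑ i, ∏ j ∈ univ.erase i, M j) ^ 2 * M i₀ + 1
  have hR : B ≤ ∏ j ∈ range B, p (n * b + j) :=
    Nat.lt_two_pow_self.le.trans (two_pow_le_prod_range_of_prime hp _ B)
  obtain ⟨M', hPM', hM'2, hid⟩ := exists_balanced_prod_mul_eq M
    (fun i => (Nat.zero_le L).trans_lt (hLM i)) i₀ _ hR
  have hprefix : ∏ i ∈ range (n * b), p i = ∏ i, M i := by
    rw [prod_range_mul_eq_prod_prod, Fin.prod_univ_eq_prod_range (fun k => ∏ j ∈ range b, p (k * b + j)) n]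
  refine ⟨n * b + B, M, M', hLM, fun i => ?_, hM'2, ?_⟩
  · exact (hLM i₀).trans_le ((single_le_prod' (fun j _ => (hLM j).pos) (mem_univ i₀)).trans
      (hPM' i))
  · rw [prod_range_add, hprefix, hid]
end

section
/- Let K be a torsion-free abelian group of finite rank, let k₁′, …, k_n′ be a maximal ℤ-linearly independent family in K, and for each 1 ≤ i ≤ n let Yᵢ be the pure subgroup of K generated by {kⱼ′ : j ≠ i}. Let H be a nonzero additive subgroup of ℚ and let h′ ∈ H be nonzero. Assume that for each 1 ≤ i ≤ n, the only positive integer d such that h′ ∈ d·H and the image of kᵢ′ in K/Yᵢ lies in d·(K/Yᵢ) is d = 1. Then for every prime p and all integers c₁, …, c_n with p not dividing gcd(c₁,…,c_n): if c₁k₁′ + ⋯ + c_nk_n′ ∈ p·K, then h′ ∉ p·H. -/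
open TensorProduct

/-- The pure subgroup of a torsion-free abelian group generated by a set `S`:
all elements some nonzero integer multiple of which lies in the subgroup
generated by `S`. -/
def pureClosure {A : Type*} [AddCommGroup A] (S : Set A) : AddSubgroup A where
  carrier := {a | ∃ m : ℤ, m ≠ 0 ∧ m • a ∈ AddSubgroup.closure S}
  zero_mem' := ⟨1, one_ne_zero, by simpa using (AddSubgroup.closure S).zero_mem⟩
  add_mem' := by
    rintro a b ⟨m, hm, hma⟩ ⟨m', hm', hmb⟩
    refine ⟨m * m', mul_ne_zero hm hm', ?_⟩
    have h : (m * m') • (a + b) = m' • (m • a) + m • (m' • b) := by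
      simp [smul_add, smul_smul, mul_comm]
    rw [h]
    exact AddSubgroup.add_mem _ (AddSubgroup.zsmul_mem _ hma m')
      (AddSubgroup.zsmul_mem _ hmb m)
  neg_mem' := by
    rintro a ⟨m, hm, hma⟩
    exact ⟨m, hm, by simpa using AddSubgroup.neg_mem _ hma⟩

/-- If, for each `i`, the only positive integer `d` simultaneously dividing
`h'` in `H` and the image of `kᵢ'` in `K ⧸ Yᵢ` is `d = 1` (where `Yᵢ` is the
pure subgroup generated by the other `kⱼ'`), then for every prime `p` and all
integers `c` with `p ∤ gcd c`, divisibility of `∑ cᵢ kᵢ'` by `p` in `K` forces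
`h'` not to be divisible by `p` in `H`. -/
theorem statement6
    (K : Type*) [AddCommGroup K] [NoZeroSMulDivisors ℤ K]
    [Module.Finite ℚ (ℚ ⊗[ℤ] K)]
    (n : ℕ) (k' : Fin n → K)
    (hind : LinearIndependent ℤ k')
    (hmax : ∀ k : K, ∃ c : ℤ, c ≠ 0 ∧ c • k ∈ Submodule.span ℤ (Set.range k'))
    (H : AddSubgroup ℚ) (hH : H ≠ ⊥)
    (h' : H) (hh' : (h' : ℚ) ≠ 0)
    (hnorm : ∀ i : Fin n, ∀ d : ℕ, 0 < d →
      (∃ b : H, h' = d • b) →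
      (∃ b : K ⧸ pureClosure (k' '' {j | j ≠ i}),
        ((k' i : K) : K ⧸ pureClosure (k' '' {j | j ≠ i})) = d • b) →
      d = 1) :
    ∀ p : ℕ, p.Prime → ∀ c : Fin n → ℤ, ¬ ((p : ℤ) ∣ Finset.univ.gcd c) →
      (∃ b : K, ∑ i, c i • k' i = (p : ℤ) • b) → ¬ ∃ b : H, h' = p • b := by
  rintro p hp c hgcd ⟨b, hb⟩ ⟨b', hb'⟩
  obtain ⟨i, hci⟩ : ∃ i, ¬ (p : ℤ) ∣ c i := by
    by_contra h
    push_neg at h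
    exact hgcd (Finset.dvd_gcd fun i _ => h i)
  set Y := pureClosure (k' '' {j | j ≠ i}) with hY
  have hmem : ∀ j, j ≠ i → k' j ∈ Y := by
    intro j hj
    exact ⟨1, one_ne_zero, by simpa using AddSubgroup.subset_closure (Set.mem_image_of_mem k' hj)⟩
  set π := QuotientAddGroup.mk' Y with hπ
  have hzero : ∀ j, j ≠ i → π (k' j) = 0 := fun j hj =>
    (QuotientAddGroup.eq_zero_iff _).mpr (hmem j hj)
  have hsum : c i • π (k' i) = (p : ℤ) • π b := by
    have h1 := congrArg π hb
    rw [map_sum, map_zsmul] at h1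
    rw [← h1, Finset.sum_eq_single i]
    · exact (map_zsmul π _ _).symm
    · intro j _ hj
      rw [map_zsmul, hzero j hj, smul_zero]
    · simp
  have hcop : IsCoprime ((p : ℤ)) (c i) :=
    (Nat.prime_iff_prime_int.mp hp).coprime_iff_not_dvd.mpr hci
  obtain ⟨u, v, huv⟩ := hcop
  have key : ((k' i : K) : K ⧸ Y) = p • (u • π (k' i) + v • π b) := by
    have : π (k' i) = (u * p + v * c i) • π (k' i) := by rw [huv, one_smul]
    calc ((k' i : K) : K ⧸ Y) = π (k' i) := rfl
      _ = (u * p + v * c i) • π (k' i) := this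
      _ = (p : ℤ) • (u • π (k' i) + v • π b) := by
          rw [add_smul, mul_comm u, mul_smul, mul_smul, hsum, smul_add,
            smul_comm v]
      _ = p • (u • π (k' i) + v • π b) := natCast_zsmul _ _
  have := hnorm i p hp.pos ⟨b', hb'⟩ ⟨u • π (k' i) + v • π b, key⟩
  exact hp.one_lt.ne' this
end

section
/- Let H be a nonzero additive subgroup of ℚ, K a nonzero torsion-free abelian group of finite rank, and G = H × K with positive cone G⁺ = {(h,k) : h > 0} ∪ {(0,0)}. Let k₁′, …, k_n′ be a maximal ℤ-linearly independent family in K and let h′ ∈ H with h′ > 0. Suppose (h₀,k₀), …, (h_n,k_n) ∈ G⁺ are ℤ-linearly independent and each of the 2n+1 elements (h′,0), (h′,k₁′), …, (h′,k_n′), (h′,−k₁′), …, (h′,−k_n′) is a sum of the (hᵢ,kᵢ) with nonnegative integer coefficients. Let h̄ ∈ H with h̄ > 0 be such that the subgroup of H generated by h₀, …, h_n equals the subgroup generated by h̄, and let k̄₁, …, k̄_n ∈ K be ℤ-linearly independent with the subgroup of K generated by k₀, …, k_n equal to the subgroup generated by k̄₁, …, k̄_n. Write hᵢ = aᵢ·h̄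 with aᵢ ∈ ℤ and kᵢ = Σ_{j=1}^n b_{ij}·k̄ⱼ with b_{ij} ∈ ℤ, for 0 ≤ i ≤ n. Then the (n+1)×(n+1) integer matrix A whose i-th row is (aᵢ, b_{i1}, …, b_{in}) satisfies |det(A)| > 1. -/
/-!
Let `μ` be the first row of `adj A`, so that `μ A = det A · e₀`. If `Σ cᵢ kᵢ = 0` then `c A` is
supported on the first coordinate, hence `det A · c = (c A)₀ · μ`. For the nonnegative
coefficients of `(h', 0)` this gives `det A · μᵢ ≥ 0`. For the sum of the coefficients of
`(h', k'ⱼ)` and `(h', -k'ⱼ)` it shows that an index `i` with `μᵢ = 0` is never used to write the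
`k'ⱼ`; then the `n` independent `k'ⱼ` lie in the span of the `kₗ`, `l ≠ i`, whose coordinate
matrix has determinant `±μᵢ = 0`, which is impossible. So `det A · μᵢ ≥ 1` for every `i`, and as
all `aᵢ ≥ 1`, `(det A)² = Σ aᵢ · det A · μᵢ ≥ n + 1 ≥ 2`.
-/

open Matrix TensorProduct

theorem Matrix.sum_smul_sum_smul_eq_sum_vecMul_smul {ι κ R M : Type*} [Fintype ι] [Fintype κ]
    [Semiring R] [AddCommMonoid M] [Module R M] (c : ι → R) (P : Matrix ι κ R) (w : κ → M) :
    ∑ i, c i • ∑ j, P i j • w j = ∑ j, (c ᵥ* P) j • w j := by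
  simp only [Finset.smul_sum, smul_smul, vecMul, dotProduct, Finset.sum_smul]
  exact Finset.sum_comm

theorem Matrix.det_ne_zero_of_linearIndependent {ι R M : Type*} [Fintype ι] [DecidableEq ι]
    [CommRing R] [IsDomain R] [AddCommGroup M] [Module R M] {u : ι → M}
    (hu : LinearIndependent R u) (P : Matrix ι ι R) (w : ι → M)
    (huw : ∀ i, u i = ∑ j, P i j • w j) : P.det ≠ 0 := fun hdet => by
  obtain ⟨v, hv0, hv⟩ := exists_vecMul_eq_zero_iff.mpr hdet
  refine hv0 (funext (Fintype.linearIndependent_iff.mp hu v ?_))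
  simp [huw, sum_smul_sum_smul_eq_sum_vecMul_smul, hv]

theorem Matrix.det_smul_eq_smul_adjugate_of_vecMul_eq_zero {ι R : Type*} [Fintype ι]
    [DecidableEq ι] [CommRing R] (A : Matrix ι ι R) (i₀ : ι) (v : ι → R)
    (hv : ∀ j ≠ i₀, (v ᵥ* A) j = 0) : A.det • v = (v ᵥ* A) i₀ • A.adjugate i₀ := by
  have hsingle : v ᵥ* A = Pi.single i₀ ((v ᵥ* A) i₀) := by
    ext j
    by_cases hj : j = i₀
    · subst hj; simp
    · simp [hv j hj, hj]
  calc A.det • v = v ᵥ* (A * A.adjugate) := by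
        rw [mul_adjugate, vecMul_smul, vecMul_one]
    _ = (v ᵥ* A) i₀ • A.adjugate i₀ := by
        rw [← vecMul_vecMul, hsingle, single_vecMul, row, Pi.single_eq_same]

section Ordered

variable {ι R : Type*} [Fintype ι] [DecidableEq ι] [CommRing R] [LinearOrder R]
  [IsStrictOrderedRing R] (A : Matrix ι ι R) (i₀ : ι)

theorem Matrix.det_mul_adjugate_nonneg_of_vecMul {c : ι → R} (hc : 0 ≤ c)
    (hc₀ : 0 < (c ᵥ* A) i₀) (hcA : ∀ j ≠ i₀, (c ᵥ* A) j = 0) (i : ι) :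
    0 ≤ A.det * A.adjugate i₀ i := by
  have h := congrFun (A.det_smul_eq_smul_adjugate_of_vecMul_eq_zero i₀ c hcA) i
  simp only [Pi.smul_apply, smul_eq_mul] at h
  have : 0 ≤ (c ᵥ* A) i₀ * (A.det * A.adjugate i₀ i) := by
    rw [mul_left_comm, ← h, ← mul_assoc]
    exact mul_nonneg (mul_self_nonneg _) (hc i)
  exact nonneg_of_mul_nonneg_right this hc₀

theorem Matrix.eq_zero_of_adjugate_eq_zero (hdet : A.det ≠ 0) {c d : ι → R} (hc : 0 ≤ c)
    (hd : 0 ≤ d) (hcd : ∀ j ≠ i₀, ((c + d) ᵥ* A) j = 0) {i : ι} (hi : A.adjugate i₀ i = 0) :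
    c i = 0 := by
  have h := congrFun (A.det_smul_eq_smul_adjugate_of_vecMul_eq_zero i₀ _ hcd) i
  simp only [Pi.smul_apply, smul_eq_mul, Pi.add_apply, hi, mul_zero] at h
  have hcd0 : c i + d i = 0 := (mul_eq_zero.mp h).resolve_left hdet
  have hci : 0 ≤ c i := hc i
  have hdi : 0 ≤ d i := hd i
  linarith

end Ordered

theorem Matrix.det_mul_eq_zero_of_col_eq_zero {R : Type*} [CommRing R] {n : ℕ}
    (C : Matrix (Fin n) (Fin (n + 1)) R) (B : Matrix (Fin (n + 1)) (Fin n) R) (i : Fin (n + 1))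
    (hC : ∀ j, C j i = 0) (hB : (B.submatrix i.succAbove id).det = 0) : (C * B).det = 0 := by
  have : C * B = C.submatrix id i.succAbove * B.submatrix i.succAbove id := by
    ext j l
    simp [mul_apply, Fin.sum_univ_succAbove _ i, hC]
  rw [this, det_mul, hB, mul_zero]

theorem Matrix.adjugate_zero_apply_ne_zero {R : Type*} [CommRing R] [LinearOrder R]
    [IsStrictOrderedRing R] {n : ℕ} (A : Matrix (Fin (n + 1)) (Fin (n + 1)) R)
    (hdet : A.det ≠ 0) (C D : Matrix (Fin n) (Fin (n + 1)) R) (hC : ∀ j, 0 ≤ C j)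
    (hD : ∀ j, 0 ≤ D j) (hCD : ∀ j, ∀ l ≠ 0, ((C j + D j) ᵥ* A) l = 0)
    (hCA : (C * A.submatrix id Fin.succ).det ≠ 0) (i : Fin (n + 1)) : A.adjugate 0 i ≠ 0 := by
  intro hi
  refine hCA (det_mul_eq_zero_of_col_eq_zero _ _ i
    (fun j => A.eq_zero_of_adjugate_eq_zero 0 hdet (hC j) (hD j) (hCD j) hi) ?_)
  rw [adjugate_fin_succ_eq_det_submatrix, Fin.succAbove_zero] at hi
  simpa using hi

theorem Matrix.one_lt_abs_det_of_det_mul_adjugate_pos {n : ℕ} (hn : 0 < n)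
    (A : Matrix (Fin (n + 1)) (Fin (n + 1)) ℤ) (hA : ∀ i, 0 < A i 0)
    (hadj : ∀ i, 0 < A.det * A.adjugate 0 i) : 1 < |A.det| := by
  have hsq : A.det * A.det = ∑ i, A i 0 * (A.det * A.adjugate 0 i) := by
    nth_rewrite 2 [det_eq_sum_mul_adjugate_col A 0]
    rw [Finset.mul_sum]
    exact Finset.sum_congr rfl fun i _ => by ring
  have hge : (n + 1 : ℤ) ≤ A.det * A.det := by
    rw [hsq]
    calc (n + 1 : ℤ) = ∑ _i : Fin (n + 1), 1 := by simp
      _ ≤ _ := Finset.sum_le_sum fun i _ => one_le_mul_of_one_le_of_one_le (hA i) (hadj i)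
  rw [← abs_mul_abs_self] at hge
  nlinarith [abs_nonneg A.det]

theorem Matrix.one_lt_abs_det_of_nonneg_relations {n : ℕ} (hn : 0 < n)
    (A : Matrix (Fin (n + 1)) (Fin (n + 1)) ℤ) (hdet : A.det ≠ 0) (hA : ∀ i, 0 < A i 0)
    {c : Fin (n + 1) → ℤ} (hc : 0 ≤ c) (hc₀ : 0 < (c ᵥ* A) 0) (hcA : ∀ l ≠ 0, (c ᵥ* A) l = 0)
    (C D : Matrix (Fin n) (Fin (n + 1)) ℤ) (hC : ∀ j, 0 ≤ C j) (hD : ∀ j, 0 ≤ D j)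
    (hCD : ∀ j, ∀ l ≠ 0, ((C j + D j) ᵥ* A) l = 0)
    (hCA : (C * A.submatrix id Fin.succ).det ≠ 0) : 1 < |A.det| := by
  have hadj := A.adjugate_zero_apply_ne_zero hdet C D hC hD hCD hCA
  refine A.one_lt_abs_det_of_det_mul_adjugate_pos hn hA fun i => ?_
  exact (A.det_mul_adjugate_nonneg_of_vecMul 0 hc hc₀ hcA i).lt_of_ne
    (mul_ne_zero hdet (hadj i)).symm

theorem sum_smul_cons_prod_eq {H K : Type*} [AddCommGroup H] [AddCommGroup K] {n : ℕ} (u : H)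
    (w : Fin n → K) (x : Fin (n + 1) → ℤ) :
    ∑ j, x j • (Fin.cons (u, 0) fun j => (0, w j) : Fin (n + 1) → H × K) j
      = (x 0 • u, ∑ j, x j.succ • w j) := by
  ext <;> simp [Fin.sum_univ_succ, Prod.fst_sum, Prod.snd_sum]

theorem eq_zero_of_sum_succ_smul_eq_zero {R M : Type*} [Ring R] [AddCommGroup M]
    [Module R M] {n : ℕ} {w : Fin n → M} (hw : LinearIndependent R w) {x : Fin (n + 1) → R}
    (hx : ∑ j, x j.succ • w j = 0) : ∀ l ≠ 0, x l = 0 := by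
  intro l hl
  obtain ⟨j, rfl⟩ := Fin.exists_succ_eq.mpr hl
  exact Fintype.linearIndependent_iff.mp hw _ hx j

theorem nonempty_of_forall_smul_mem_span {ι K : Type*} [AddCommGroup K]
    [NoZeroSMulDivisors ℤ K] [Nontrivial K] {k : ι → K}
    (hk : ∀ x : K, ∃ c : ℤ, c ≠ 0 ∧ c • x ∈ Submodule.span ℤ (Set.range k)) : Nonempty ι := by
  by_contra hι
  rw [not_nonempty_iff] at hι
  obtain ⟨x, hx⟩ := exists_ne (0 : K)
  obtain ⟨c, hc, hcx⟩ := hk x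
  rw [Set.range_eq_empty, Submodule.span_empty, Submodule.mem_bot, smul_eq_zero] at hcx
  exact hcx.elim hc hx

theorem statement8_general
    (H : AddSubgroup ℚ)
    (K : Type*) [AddCommGroup K] [NoZeroSMulDivisors ℤ K] [Nontrivial K]
    (n : ℕ) (k' : Fin n → K)
    (hind : LinearIndependent ℤ k')
    (hmax : ∀ x : K, ∃ c : ℤ, c ≠ 0 ∧ c • x ∈ Submodule.span ℤ (Set.range k'))
    (h' : H) (hh' : 0 < (h' : ℚ))
    (h : Fin (n + 1) → H) (k : Fin (n + 1) → K)
    (hpos : ∀ i, ((h i, k i) : H × K) ∈ ({g : H × K | 0 < (g.1 : ℚ)} ∪ {0}))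
    (hindG : LinearIndependent ℤ (fun i : Fin (n + 1) => ((h i, k i) : H × K)))
    (hcomb : ∀ f ∈ ({((h' : H), (0 : K))}
          ∪ (Set.range fun i : Fin n => ((h' : H), k' i))
          ∪ (Set.range fun i : Fin n => ((h' : H), -(k' i))) : Set (H × K)),
        ∃ c : Fin (n + 1) → ℕ, f = ∑ i, c i • ((h i, k i) : H × K))
    (hbar : H) (hhbar : 0 < (hbar : ℚ))
    (kbar : Fin n → K) (hkbarind : LinearIndependent ℤ kbar)
    (a : Fin (n + 1) → ℤ) (ha : ∀ i, h i = a i • hbar)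
    (b : Fin (n + 1) → Fin n → ℤ) (hb : ∀ i, k i = ∑ j, b i j • kbar j) :
    1 < |(Matrix.of fun i j : Fin (n + 1) =>
        if hj : j = 0 then a i else b i (j.pred hj)).det| := by
  set A : Matrix (Fin (n + 1)) (Fin (n + 1)) ℤ :=
    Matrix.of fun i j => if hj : j = 0 then a i else b i (j.pred hj)
  set e : Fin (n + 1) → H × K := Fin.cons (hbar, 0) fun j => (0, kbar j)
  have hg : ∀ i, ((h i, k i) : H × K) = ∑ j, A i j • e j := fun i => by
    simp only [e, sum_smul_cons_prod_eq]
    simp [A, ha, hb, Fin.succ_ne_zero]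
  have hsum : ∀ c : Fin (n + 1) → ℕ, ∑ i, c i • ((h i, k i) : H × K)
      = (((fun i => (c i : ℤ)) ᵥ* A) 0 • hbar,
          ∑ j, ((fun i => (c i : ℤ)) ᵥ* A) j.succ • kbar j) := fun c => by
    simp only [hg, ← natCast_zsmul, e]
    rw [sum_smul_sum_smul_eq_sum_vecMul_smul, sum_smul_cons_prod_eq]
  have hA0 : ∀ i, 0 < A i 0 := fun i => by
    have hi : 0 < ((h i : H) : ℚ) := ((hpos i).resolve_right (hindG.ne_zero i)).out
    rw [ha] at hi
    exact pos_of_smul_pos_right (by simpa [A] using hi) hhbar.le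
  obtain ⟨c₀, hc₀⟩ := hcomb _ (Or.inl (Or.inl rfl))
  choose cp hcp using fun j => hcomb _ (Or.inl (Or.inr ⟨j, rfl⟩))
  choose cm hcm using fun j => hcomb _ (Or.inr ⟨j, rfl⟩)
  simp only [hsum, Prod.mk.injEq, forall_and] at hc₀ hcp hcm
  refine A.one_lt_abs_det_of_nonneg_relations
    (Fin.pos_iff_nonempty.mpr (nonempty_of_forall_smul_mem_span hmax))
    (A.det_ne_zero_of_linearIndependent hindG e hg) hA0 (fun i => by simp)
    (pos_of_smul_pos_right (by simpa [hc₀.1] using hh') hhbar.le)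
    (eq_zero_of_sum_succ_smul_eq_zero hkbarind hc₀.2.symm)
    (Matrix.of fun j i => (cp j i : ℤ)) (Matrix.of fun j i => (cm j i : ℤ))
    (fun j i => by simp) (fun j i => by simp) (fun j => ?_)
    (det_ne_zero_of_linearIndependent hind _ kbar hcp.2)
  refine eq_zero_of_sum_succ_smul_eq_zero hkbarind ?_
  simp only [add_vecMul, Pi.add_apply, add_smul, Finset.sum_add_distrib]
  exact (congrArg₂ (· + ·) (hcp.2 j) (hcm.2 j)).symm.trans (add_neg_cancel _)

/-- If the `2n+1` positive elements `(h',0), (h', ±kᵢ')` are nonnegative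
integer combinations of `ℤ`-linearly independent positive elements
`(hᵢ, kᵢ)`, and `h̄`, `k̄₁, …, k̄_n` are generators as in the paper, then the
coefficient matrix `A = (aᵢ | bᵢⱼ)` has `|det A| > 1`. -/
theorem statement8
    (H : AddSubgroup ℚ) (hH : H ≠ ⊥)
    (K : Type*) [AddCommGroup K] [NoZeroSMulDivisors ℤ K] [Nontrivial K]
    [Module.Finite ℚ (ℚ ⊗[ℤ] K)]
    (n : ℕ) (k' : Fin n → K)
    (hind : LinearIndependent ℤ k')
    (hmax : ∀ x : K, ∃ c : ℤ, c ≠ 0 ∧ c • x ∈ Submodule.span ℤ (Set.range k'))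
    (h' : H) (hh' : 0 < (h' : ℚ))
    (h : Fin (n + 1) → H) (k : Fin (n + 1) → K)
    (hpos : ∀ i, ((h i, k i) : H × K) ∈ ({g : H × K | 0 < (g.1 : ℚ)} ∪ {0}))
    (hindG : LinearIndependent ℤ (fun i : Fin (n + 1) => ((h i, k i) : H × K)))
    (hcomb : ∀ f ∈ ({((h' : H), (0 : K))}
          ∪ (Set.range fun i : Fin n => ((h' : H), k' i))
          ∪ (Set.range fun i : Fin n => ((h' : H), -(k' i))) : Set (H × K)),
        ∃ c : Fin (n + 1) → ℕ, f = ∑ i, c i • ((h i, k i) : H × K))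
    (hbar : H) (hhbar : 0 < (hbar : ℚ))
    (hgenH : AddSubgroup.closure (Set.range h) = AddSubgroup.closure {hbar})
    (kbar : Fin n → K) (hkbarind : LinearIndependent ℤ kbar)
    (hgenK : AddSubgroup.closure (Set.range k) = AddSubgroup.closure (Set.range kbar))
    (a : Fin (n + 1) → ℤ) (ha : ∀ i, h i = a i • hbar)
    (b : Fin (n + 1) → Fin n → ℤ) (hb : ∀ i, k i = ∑ j, b i j • kbar j) :
    1 < |(Matrix.of fun i j : Fin (n + 1) =>
        if hj : j = 0 then a i else b i (j.pred hj)).det| :=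
  statement8_general H K n k' hind hmax h' hh' h k hpos hindG hcomb hbar hhbar kbar hkbarind a ha b
    hb
end

section
/- Let n ≥ 1, let A be an (n+1)×(n+1) integer matrix with D = det(A) ≠ 0, and let B be the (n+1)×n integer matrix obtained by deleting the first column of A. Suppose that the rows of B generate ℤⁿ as an abelian group. If c ∈ ℤ^{n+1} is a row vector and a′ an integer such that c·A = (a′, 0, …, 0), then D divides a′. -/
namespace Matrix

variable {R : Type*} [CommRing R] {n : ℕ}

theorem det_eq_mul_det_submatrix_succ_of_row_zero_eq_single
    (M : Matrix (Fin (n + 1)) (Fin (n + 1)) R) (a : R) (h : M 0 = Pi.single 0 a) :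
    M.det = a * (M.submatrix Fin.succ Fin.succ).det := by
  rw [det_succ_row_zero, Fintype.sum_eq_single 0 fun j hj => by simp [h, hj], h]
  simp [Fin.succAbove_zero]

/-- Completing `c` by row vectors `t k` with `t k ᵥ* B = eₖ` gives a matrix `M` for which `M * A`
has first row `(a, 0, …, 0)` and lower right block `1`, so that `det M * det A = a`. -/
theorem det_dvd_of_vecMul_eq_single (A : Matrix (Fin (n + 1)) (Fin (n + 1)) R)
    (hB : Submodule.span R (Set.range (A.submatrix id Fin.succ)) = ⊤)
    (c : Fin (n + 1) → R) (a : R) (hc : c ᵥ* A = Pi.single 0 a) :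
    A.det ∣ a := by
  have hsurj : Function.Surjective (A.submatrix id Fin.succ).vecMulLinear := by
    rw [← LinearMap.range_eq_top, range_vecMulLinear]
    exact hB
  choose t ht using fun k : Fin n => hsurj (Pi.single k 1)
  let M : Matrix (Fin (n + 1)) (Fin (n + 1)) R := of (Fin.cons c t)
  have hrow : (M * A) 0 = Pi.single 0 a := hc
  have hblock : (M * A).submatrix Fin.succ Fin.succ = 1 := by
    ext k l
    have := congr_fun (ht k) l
    simp only [vecMulLinear_apply, vecMul, dotProduct, submatrix_apply, id] at this
    simp [M, mul_apply, this, one_apply, Pi.single_apply, eq_comm]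
  refine ⟨M.det, ?_⟩
  rw [mul_comm, ← det_mul, det_eq_mul_det_submatrix_succ_of_row_zero_eq_single _ a hrow,
    hblock, det_one, mul_one]

end Matrix

theorem statement10_general (n : ℕ)
    (A : Matrix (Fin (n + 1)) (Fin (n + 1)) ℤ)
    (hB : AddSubgroup.closure
        (Set.range fun i : Fin (n + 1) => fun j : Fin n => A i j.succ) = ⊤)
    (c : Fin (n + 1) → ℤ) (a' : ℤ)
    (hc : Matrix.vecMul c A = fun j => if j = 0 then a' else 0) :
    A.det ∣ a' := by
  have hspan : Submodule.span ℤ (Set.range (A.submatrix id Fin.succ)) = ⊤ :=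
    Submodule.toAddSubgroup_injective <| by
      rw [Submodule.span_int_eq_addSubgroupClosure, Submodule.top_toAddSubgroup]
      exact hB
  refine A.det_dvd_of_vecMul_eq_single hspan c a' ?_
  rw [hc]
  ext j
  simp [Pi.single_apply]

/-- If `A` is an `(n+1) × (n+1)` integer matrix with nonzero determinant `D`
whose last `n` columns form a matrix `B` whose rows generate `ℤⁿ` as an
abelian group, and `c · A = (a', 0, …, 0)` for an integer row vector `c`, then
`D ∣ a'`. -/
theorem statement10 (n : ℕ) (hn : 1 ≤ n)
    (A : Matrix (Fin (n + 1)) (Fin (n + 1)) ℤ) (hD : A.det ≠ 0)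
    (hB : AddSubgroup.closure
        (Set.range fun i : Fin (n + 1) => fun j : Fin n => A i j.succ) = ⊤)
    (c : Fin (n + 1) → ℤ) (a' : ℤ)
    (hc : Matrix.vecMul c A = fun j => if j = 0 then a' else 0) :
    A.det ∣ a' :=
  statement10_general n A hB c a' hc
end

section
/- Let H be a nonzero additive subgroup of ℚ, K a torsion-free abelian group, and G = H × K with positive cone G⁺ = {(h,k) : h > 0} ∪ {(0,0)}. If φ : G → ℝ is an additive group homomorphism with φ(g) ≥ 0 for every g ∈ G⁺, then there exists a real number c ≥ 0 such that φ(h,k) = c·h for all (h,k) ∈ G (where h ∈ H ⊆ ℚ ⊆ ℝ); in particular φ(0,k) = 0 for every k ∈ K. -/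
/-!
Fix `x ∈ H` with `x > 0`. Every `(x, k)` is positive, so `φ (x, 0) + n • φ (0, k) ≥ 0` for all
`n : ℕ`; by the Archimedean property `φ (0, k) ≥ 0`, and applying this to `-k` gives
`φ (0, k) = 0`. On `H` itself, any two elements of `ℚ` are `ℤ`-commensurable, which forces an
additive map `H → ℝ` to be proportional to the inclusion, with factor `φ (x, 0) / x ≥ 0`.
-/

theorem nonneg_of_forall_add_nsmul_nonneg {α : Type*} [AddCommGroup α] [LinearOrder α]
    [IsOrderedAddMonoid α] [Archimedean α] {a b : α} (h : ∀ n : ℕ, 0 ≤ a + n • b) : 0 ≤ b := by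
  by_contra! hb
  obtain ⟨n, hn⟩ := exists_nsmul_lt hb (-a)
  exact (h n).not_gt (lt_neg_iff_add_neg'.mp hn)

theorem AddMonoidHom.map_zero_prod_eq_zero {A B α : Type*} [AddCommGroup A] [AddCommGroup B]
    [AddCommGroup α] [LinearOrder α] [IsOrderedAddMonoid α] [Archimedean α]
    (φ : A × B →+ α) {a : A} (h : ∀ b, 0 ≤ φ (a, b)) (b : B) : φ (0, b) = 0 := by
  have nonneg (b : B) : 0 ≤ φ (0, b) :=
    nonneg_of_forall_add_nsmul_nonneg (a := φ (a, 0)) fun n => by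
      simpa [← map_nsmul, ← map_add] using h (n • b)
  have : φ (0, -b) = -φ (0, b) := by rw [← map_neg, Prod.neg_mk, neg_zero]
  exact le_antisymm (by simpa [this] using nonneg (-b)) (nonneg b)

theorem Rat.den_mul_num_zsmul_eq_num_mul_den_zsmul (p q : ℚ) : (p.den * q.num : ℤ) • p = (p.num * q.den : ℤ) • q := by
  rw [zsmul_eq_mul, zsmul_eq_mul]
  push_cast
  rw [← Rat.mul_den_eq_num p, ← Rat.mul_den_eq_num q]
  ring

theorem AddMonoidHom.map_mul_coe_eq_map_mul_coe {F : Type*} [Field F] [CharZero F]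
    {H : AddSubgroup ℚ} (f : H →+ F) (p q : H) : f p * (q : ℚ) = f q * (p : ℚ) := by
  have hpq : ((p : ℚ).den * (q : ℚ).num : ℤ) • p = ((p : ℚ).num * (q : ℚ).den : ℤ) • q :=
    Subtype.ext (by simpa using Rat.den_mul_num_zsmul_eq_num_mul_den_zsmul p q)
  have hf := congrArg f hpq
  simp only [map_zsmul, zsmul_eq_mul] at hf
  push_cast at hf
  rw [Rat.cast_def, Rat.cast_def]
  field_simp
  linear_combination hf

theorem statement13_general
    (H : AddSubgroup ℚ) (hH : H ≠ ⊥)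
    (K : Type*) [AddCommGroup K]
    (φ : H × K →+ ℝ)
    (hφ : ∀ g ∈ ({g : H × K | 0 < (g.1 : ℚ)} ∪ {0} : Set (H × K)), 0 ≤ φ g) :
    ∃ c : ℝ, 0 ≤ c ∧ (∀ g : H × K, φ g = c * ((g.1 : ℚ) : ℝ)) ∧
      ∀ k : K, φ (0, k) = 0 := by
  have : Nontrivial H := (AddSubgroup.nontrivial_iff_ne_bot H).mpr hH
  obtain ⟨x, hx⟩ : ∃ x : H, 0 < (x : ℚ) := exists_zero_lt
  have hφx (k : K) : 0 ≤ φ (x, k) := hφ _ (Or.inl hx)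
  have hK := φ.map_zero_prod_eq_zero hφx
  have hx' : (0 : ℝ) < (x : ℚ) := by exact_mod_cast hx
  refine ⟨φ (x, 0) / (x : ℚ), div_nonneg (hφx 0) hx'.le, fun g => ?_, hK⟩
  have hprop := (φ.comp (AddMonoidHom.inl H K)).map_mul_coe_eq_map_mul_coe g.1 x
  simp only [AddMonoidHom.comp_apply, AddMonoidHom.inl_apply] at hprop
  calc φ g = φ (g.1, 0) + φ (0, g.2) := by rw [← map_add, Prod.mk_add_mk, add_zero, zero_add]
    _ = φ (x, 0) / (x : ℚ) * (g.1 : ℚ) := by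
      rw [hK, add_zero, div_mul_eq_mul_div, ← hprop]
      field_simp

/-- Uniqueness of the state on `G = H ⊕ K`: every positive additive
homomorphism `φ : G → ℝ` is a nonnegative multiple of the projection
`(h, k) ↦ h`; in particular `φ` vanishes on `K`. -/
theorem statement13
    (H : AddSubgroup ℚ) (hH : H ≠ ⊥)
    (K : Type*) [AddCommGroup K] [NoZeroSMulDivisors ℤ K]
    (φ : H × K →+ ℝ)
    (hφ : ∀ g ∈ ({g : H × K | 0 < (g.1 : ℚ)} ∪ {0} : Set (H × K)), 0 ≤ φ g) :
    ∃ c : ℝ, 0 ≤ c ∧ (∀ g : H × K, φ g = c * ((g.1 : ℚ) : ℝ)) ∧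
      ∀ k : K, φ (0, k) = 0 :=
  statement13_general H hH K φ hφ
end

section
/- Let ℤ[1/3] = {a/3ᵏ : a ∈ ℤ, k ∈ ℕ} ⊆ ℚ and let G = ℤ[1/3] × ℤ with positive cone G⁺ = {(a,b) : a > 0} ∪ {(0,0)}. Then there is no finite ℤ-linearly independent subset S of G⁺ such that each of the three elements (1,0), (1,1), (1,−1) of G⁺ can be written as a sum of elements of S with nonnegative integer coefficients. In particular, G is not ultrasimplicial. -/
/-- The additive subgroup `ℤ[1/3] = {a / 3ᵏ : a ∈ ℤ, k ∈ ℕ}` of `ℚ`. -/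
def zOneThird : AddSubgroup ℚ where
  carrier := {q : ℚ | ∃ (a : ℤ) (k : ℕ), q = (a : ℚ) / 3 ^ k}
  zero_mem' := ⟨0, 0, by norm_num⟩
  add_mem' := by
    rintro x y ⟨a, k, rfl⟩ ⟨b, l, rfl⟩
    refine ⟨a * 3 ^ l + b * 3 ^ k, k + l, ?_⟩
    push_cast
    rw [pow_add]
    field_simp
  neg_mem' := by
    rintro x ⟨a, k, rfl⟩
    exact ⟨-a, k, by push_cast; ring⟩

/-- The element `1 ∈ ℤ[1/3]`. -/
def oneThirdOne : zOneThird := ⟨1, 1, 0, by norm_num⟩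

section Aux

/-- The embedding of `G` into `ℚ × ℚ`. -/
def elliottEmb : (zOneThird × ℤ) →+ ℚ × ℚ :=
  AddMonoidHom.prodMap zOneThird.subtype (Int.castAddHom ℚ)

lemma elliottEmb_inj : Function.Injective elliottEmb := by
  have : ⇑elliottEmb = Prod.map (⇑zOneThird.subtype) (⇑(Int.castAddHom ℚ)) := rfl
  rw [this]
  exact Function.Injective.prodMap Subtype.val_injective Int.cast_injective

lemma elliott_card_le_two (S : Finset (zOneThird × ℤ))
    (hli : LinearIndependent ℤ (fun s : (S : Set (zOneThird × ℤ)) => (s : zOneThird × ℤ))) :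
    S.card ≤ 2 := by
  have h1 : LinearIndependent ℤ (fun s : (S : Set (zOneThird × ℤ)) => elliottEmb s) := by
    have := hli.map' elliottEmb.toIntLinearMap ?_
    · exact this
    · rw [LinearMap.ker_eq_bot]; exact elliottEmb_inj
  have h2 : LinearIndependent ℚ (fun s : (S : Set (zOneThird × ℤ)) => elliottEmb s) :=
    (LinearIndependent.iff_fractionRing ℤ ℚ).mp h1
  have h3 := h2.fintype_card_le_finrank
  simp only [Finset.coe_sort_coe, Fintype.card_coe] at h3
  have : Module.finrank ℚ (ℚ × ℚ) = 2 := by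
    rw [Module.finrank_prod, Module.finrank_self]
  omega

lemma elliott_coeff_zero {G : Type*} [AddCommGroup G] (S : Finset G)
    (hli : LinearIndependent ℤ (fun s : (S : Set G) => (s : G)))
    (g : G → ℤ) (h : ∑ x ∈ S, g x • x = 0) : ∀ x ∈ S, g x = 0 := by
  intro x hx
  refine linearIndependent_iff'.mp hli Finset.univ (fun i => g i) ?_ ⟨x, hx⟩ (Finset.mem_univ _)
  rw [← h]
  exact Finset.sum_coe_sort S (fun x => g x • x)

lemma elliott_fst_nsmul (n : ℕ) (x : zOneThird) : ((n • x : zOneThird) : ℚ) = n * (x : ℚ) := by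
  simpa [nsmul_eq_mul] using map_nsmul zOneThird.subtype n x

/-- First coordinate (in `ℚ`) of a pair combination. -/
lemma elliott_fst_pair (s t : zOneThird × ℤ) (a b : ℕ) (v : zOneThird)
    (n : ℤ) (h : (v, n) = a • s + b • t) :
    (v : ℚ) = (a : ℚ) * (s.1 : ℚ) + (b : ℚ) * (t.1 : ℚ) := by
  have h1 := congrArg (fun g : zOneThird × ℤ => ((g.1 : ℚ))) h
  simpa [Prod.fst_add, Prod.smul_fst, elliott_fst_nsmul] using h1

/-- Second coordinate of a pair combination. -/
lemma elliott_snd_pair (s t : zOneThird × ℤ) (a b : ℕ) (v : zOneThird)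
    (n : ℤ) (h : (v, n) = a • s + b • t) :
    n = (a : ℤ) * s.2 + (b : ℤ) * t.2 := by
  have h1 := congrArg (fun g : zOneThird × ℤ => g.2) h
  simpa [Prod.snd_add, Prod.smul_snd, nsmul_eq_mul] using h1

lemma elliott_main :
    ¬ ∃ S : Finset (zOneThird × ℤ),
      ↑S ⊆ ({g : zOneThird × ℤ | 0 < (g.1 : ℚ)} ∪ {0} : Set (zOneThird × ℤ)) ∧
      LinearIndependent ℤ
        (fun s : (S : Set (zOneThird × ℤ)) => (s : zOneThird × ℤ)) ∧
      ∀ f ∈ ({(oneThirdOne, 0), (oneThirdOne, 1), (oneThirdOne, -1)} :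
          Set (zOneThird × ℤ)),
        ∃ c : zOneThird × ℤ → ℕ, f = ∑ s ∈ S, c s • s := by
  rintro ⟨S, hS, hli, hgen⟩
  obtain ⟨p, hp⟩ := hgen (oneThirdOne, 0) (by simp)
  obtain ⟨q, hq⟩ := hgen (oneThirdOne, 1) (by simp)
  obtain ⟨r, hr⟩ := hgen (oneThirdOne, -1) (by simp)
  -- positivity of first coordinates
  have hpos : ∀ x ∈ S, 0 < ((x.1 : zOneThird) : ℚ) := by
    intro x hx
    rcases hS hx with h | h
    · exact h
    · exfalso
      exact hli.ne_zero ⟨x, hx⟩ (by simpa using h)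
  -- coefficient relation q + r = 2p
  have hrel : ∀ x ∈ S, (q x : ℤ) + (r x : ℤ) = 2 * (p x : ℤ) := by
    have hz : ∑ x ∈ S, ((q x : ℤ) + (r x : ℤ) - 2 * (p x : ℤ)) • x = 0 := by
      have hsplit : ∑ x ∈ S, ((q x : ℤ) + (r x : ℤ) - 2 * (p x : ℤ)) • x
          = (∑ x ∈ S, q x • x) + (∑ x ∈ S, r x • x) - (2 : ℤ) • (∑ x ∈ S, p x • x) := by
        rw [Finset.smul_sum, ← Finset.sum_add_distrib, ← Finset.sum_sub_distrib]
        refine Finset.sum_congr rfl fun x _ => ?_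
        rw [sub_smul, add_smul, natCast_zsmul, natCast_zsmul, mul_smul, natCast_zsmul]
      rw [hsplit, ← hp, ← hq, ← hr]
      refine Prod.ext ?_ ?_
      · show (oneThirdOne + oneThirdOne - (2:ℤ) • oneThirdOne : zOneThird) = 0
        rw [two_zsmul]; abel
      · show (1 + (-1) - (2:ℤ) • (0:ℤ) : ℤ) = 0
        simp
    intro x hx
    have := elliott_coeff_zero S hli _ hz x hx
    omega
  have hcard := elliott_card_le_two S hli
  interval_cases h : S.card
  · -- card 0
    rw [Finset.card_eq_zero.mp h, Finset.sum_empty] at hq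
    simpa using congrArg Prod.snd hq
  · -- card 1
    obtain ⟨s, rfl⟩ := Finset.card_eq_one.mp h
    rw [Finset.sum_singleton] at hp hq
    have hxs : (0:ℚ) < (s.1 : ℚ) := hpos s (by simp)
    have hp1 : ((oneThirdOne : zOneThird) : ℚ) = (p s : ℚ) * (s.1 : ℚ) := by
      have h1 := congrArg (fun g : zOneThird × ℤ => ((g.1 : ℚ))) hp
      simpa [Prod.smul_fst, elliott_fst_nsmul] using h1
    have hp2 : (0:ℤ) = (p s : ℤ) * s.2 := by
      have h1 := congrArg (fun g : zOneThird × ℤ => g.2) hp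
      simpa [Prod.smul_snd, nsmul_eq_mul] using h1
    have hq2 : (1:ℤ) = (q s : ℤ) * s.2 := by
      have h1 := congrArg (fun g : zOneThird × ℤ => g.2) hq
      simpa [Prod.smul_snd, nsmul_eq_mul] using h1
    have h1 : ((oneThirdOne : zOneThird) : ℚ) = 1 := rfl
    have hps : p s ≠ 0 := by
      intro h0
      rw [h0] at hp1
      simp [h1] at hp1
    have hs2 : s.2 = 0 := by
      rcases mul_eq_zero.mp hp2.symm with h' | h'
      · exact absurd (by exact_mod_cast h') hps
      · exact h'
    rw [hs2, mul_zero] at hq2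
    exact one_ne_zero hq2
  · -- card 2
    obtain ⟨s, t, hst, rfl⟩ := Finset.card_eq_two.mp h
    have hsmem : s ∈ ({s, t} : Finset (zOneThird × ℤ)) := by simp
    have htmem : t ∈ ({s, t} : Finset (zOneThird × ℤ)) := by simp
    rw [Finset.sum_pair hst] at hp hq hr
    have h1 : ((oneThirdOne : zOneThird) : ℚ) = 1 := rfl
    set xs : ℚ := (s.1 : ℚ) with hxs_def
    set xt : ℚ := (t.1 : ℚ) with hxt_def
    have hxs : 0 < xs := hpos s hsmem
    have hxt : 0 < xt := hpos t htmem
    have hp1 : (1:ℚ) = (p s : ℚ) * xs + (p t : ℚ) * xt := by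
      have := elliott_fst_pair s t (p s) (p t) oneThirdOne 0 hp
      rwa [h1] at this
    have hq1 : (1:ℚ) = (q s : ℚ) * xs + (q t : ℚ) * xt := by
      have := elliott_fst_pair s t (q s) (q t) oneThirdOne 1 hq
      rwa [h1] at this
    have hp2 : (0:ℤ) = (p s : ℤ) * s.2 + (p t : ℤ) * t.2 :=
      elliott_snd_pair s t (p s) (p t) oneThirdOne 0 hp
    have hq2 : (1:ℤ) = (q s : ℤ) * s.2 + (q t : ℤ) * t.2 :=
      elliott_snd_pair s t (q s) (q t) oneThirdOne 1 hq
    set P1 : ℤ := (p s : ℤ) with hP1_def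
    set P2 : ℤ := (p t : ℤ) with hP2_def
    set D1 : ℤ := (q s : ℤ) - (p s : ℤ) with hD1_def
    set D2 : ℤ := (q t : ℤ) - (p t : ℤ) with hD2_def
    have hrels := hrel s hsmem
    have hrelt := hrel t htmem
    have habs1 : |D1| ≤ P1 := abs_le.mpr ⟨by omega, by omega⟩
    have habs2 : |D2| ≤ P2 := abs_le.mpr ⟨by omega, by omega⟩
    have hE3 : (0:ℚ) = (D1 : ℚ) * xs + (D2 : ℚ) * xt := by
      push_cast [hD1_def, hD2_def]
      linear_combination hq1 - hp1
    have hE4 : (1:ℤ) = D1 * s.2 + D2 * t.2 := by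
      rw [hD1_def, hD2_def]
      linear_combination hq2 - hp2
    set D : ℤ := P1 * D2 - P2 * D1 with hD_def
    have hx1 : (D : ℚ) * xs = (D2 : ℚ) := by
      push_cast [hD_def, hP1_def, hP2_def]
      linear_combination -(D2:ℚ) * hp1 + (P2:ℚ) * hE3
    have hx2 : (D : ℚ) * xt = -(D1 : ℚ) := by
      push_cast [hD_def, hP1_def, hP2_def]
      linear_combination (D1:ℚ) * hp1 - (P1:ℚ) * hE3
    have hn2 : D * t.2 = P1 := by
      rw [hD_def]
      linear_combination -P1 * hE4 + D1 * hp2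
    by_cases hD : D = 0
    · have hD2z : D2 = 0 := by
        have : (D2 : ℚ) = 0 := by rw [← hx1, hD, Int.cast_zero, zero_mul]
        exact_mod_cast this
      have hD1z : D1 = 0 := by
        have : (-(D1 : ℚ)) = 0 := by rw [← hx2, hD, Int.cast_zero, zero_mul]
        have : (D1 : ℚ) = 0 := by linarith
        exact_mod_cast this
      rw [hD1z, hD2z] at hE4
      simp at hE4
    · -- D ≠ 0
      have hDq : (D : ℚ) ≠ 0 := Int.cast_ne_zero.mpr hD
      have hprodq : (0:ℚ) < (D2 : ℚ) * (-(D1 : ℚ)) := by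
        rw [← hx1, ← hx2]
        have : (D:ℚ) * xs * ((D:ℚ) * xt) = (D:ℚ)^2 * (xs * xt) := by ring
        rw [this]
        positivity
      have hprod : D1 * D2 < 0 := by
        have : (0:ℚ) < -((D1:ℚ) * (D2:ℚ)) := by linarith [hprodq]
        have h' : ((D1 * D2 : ℤ) : ℚ) < 0 := by push_cast; linarith
        exact_mod_cast h'
      have hD1ne : D1 ≠ 0 := fun h0 => by simp [h0] at hprod
      have hD2ne : D2 ≠ 0 := fun h0 => by simp [h0] at hprod
      have hP1pos : 1 ≤ P1 := le_trans (Int.one_le_abs hD1ne) habs1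
      have hP2pos : 1 ≤ P2 := le_trans (Int.one_le_abs hD2ne) habs2
      have hdvd : |D| ≤ P1 := by
        refine Int.le_of_dvd (by linarith) ?_
        exact (abs_dvd _ _).mpr ⟨t.2, hn2.symm⟩
      have hbig : P1 + P2 ≤ |D| := by
        rcases lt_or_gt_of_ne hD1ne with h1' | h1' <;>
          rcases lt_or_gt_of_ne hD2ne with h2' | h2'
        · exact absurd (mul_pos_of_neg_of_neg h1' h2') (by linarith)
        · refine le_abs.mpr (Or.inl ?_)
          have e1 : P1 * 1 ≤ P1 * D2 := mul_le_mul_of_nonneg_left (by linarith) (by linarith)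
          have e2 : P2 * 1 ≤ P2 * (-D1) := mul_le_mul_of_nonneg_left (by linarith) (by linarith)
          rw [hD_def]
          rw [mul_one] at e1 e2
          linarith
        · refine le_abs.mpr (Or.inr ?_)
          have e1 : P1 * 1 ≤ P1 * (-D2) := mul_le_mul_of_nonneg_left (by linarith) (by linarith)
          have e2 : P2 * 1 ≤ P2 * D1 := mul_le_mul_of_nonneg_left (by linarith) (by linarith)
          rw [hD_def]
          rw [mul_one] at e1 e2
          linarith
        · exact absurd (mul_pos h1' h2') (by linarith)
      linarith

end Aux

/-- Elliott's example: `G = ℤ[1/3] ⊕ ℤ` with the strict ordering from the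
first coordinate admits no finite `ℤ`-linearly independent subset of the
positive cone generating `(1,0)`, `(1,1)`, `(1,−1)` with nonnegative integer
coefficients; in particular `G` is not ultrasimplicial. -/
theorem statement14 :
    (¬ ∃ S : Finset (zOneThird × ℤ),
      ↑S ⊆ ({g : zOneThird × ℤ | 0 < (g.1 : ℚ)} ∪ {0} : Set (zOneThird × ℤ)) ∧
      LinearIndependent ℤ
        (fun s : (S : Set (zOneThird × ℤ)) => (s : zOneThird × ℤ)) ∧
      ∀ f ∈ ({(oneThirdOne, 0), (oneThirdOne, 1), (oneThirdOne, -1)} :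
          Set (zOneThird × ℤ)),
        ∃ c : zOneThird × ℤ → ℕ, f = ∑ s ∈ S, c s • s) ∧
    ¬ IsUltrasimplicial ({g : zOneThird × ℤ | 0 < (g.1 : ℚ)} ∪ {0}) := by
  refine ⟨elliott_main, ?_⟩
  intro h
  have hmem : ((({(oneThirdOne, 0), (oneThirdOne, 1), (oneThirdOne, -1)} :
      Finset (zOneThird × ℤ))) : Set (zOneThird × ℤ)) ⊆
      ({g : zOneThird × ℤ | 0 < (g.1 : ℚ)} ∪ {0}) := by
    intro x hx
    simp only [Finset.coe_insert, Finset.coe_singleton, Set.mem_insert_iff,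
      Set.mem_singleton_iff] at hx
    rcases hx with rfl | rfl | rfl <;>
      exact Or.inl (by show (0:ℚ) < ((oneThirdOne : zOneThird) : ℚ); norm_num [oneThirdOne])
  obtain ⟨S, hS, hli, hgen⟩ := h _ hmem
  refine elliott_main ⟨S, hS, hli, ?_⟩
  intro f hf
  refine hgen f ?_
  simp only [Set.mem_insert_iff, Set.mem_singleton_iff] at hf
  rcases hf with rfl | rfl | rfl <;> simp
end

section
/- Let K be a nontrivial torsion-free abelian group and let G = ℤ × K be ordered by g₁ ≤ g₂ if and only if g₂ − g₁ ∈ G⁺, where G⁺ = {(a,k) : a > 0} ∪ {(0,0)}. Then G does not satisfy the Riesz interpolation property: there exist x₁, x₂, y₁, y₂ ∈ G with xᵢ ≤ yⱼ for all i, j ∈ {1,2} such that there is no z ∈ G with xᵢ ≤ z ≤ yⱼ for all i, j. -/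
/-- If `K` is a nontrivial torsion-free abelian group, the ordered group
`G = ℤ ⊕ K` with positive cone `{(a,k) : a > 0} ∪ {0}` fails the Riesz
interpolation property. -/
theorem statement15 (K : Type*) [AddCommGroup K] [Nontrivial K]
    [NoZeroSMulDivisors ℤ K] :
    ∃ x y : Fin 2 → ℤ × K,
      (∀ i j, y j - x i ∈ ({g : ℤ × K | 0 < g.1} ∪ {0} : Set (ℤ × K))) ∧
      ¬ ∃ z : ℤ × K, ∀ i j,
          z - x i ∈ ({g : ℤ × K | 0 < g.1} ∪ {0} : Set (ℤ × K)) ∧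
          y j - z ∈ ({g : ℤ × K | 0 < g.1} ∪ {0} : Set (ℤ × K)) := by
  obtain ⟨k, hk⟩ := exists_ne (0 : K)
  refine ⟨![(0, 0), (0, k)], ![(1, 0), (1, k)], ?_, ?_⟩
  · intro i j
    left
    fin_cases i <;> fin_cases j <;> simp
  · rintro ⟨⟨a, m⟩, hz⟩
    have h00 := hz 0 0
    have h11 := hz 1 1
    have h1 : (0:ℤ) ≤ a := by
      rcases h00.1 with h | h
      · simp at h; omega
      · simp [Prod.ext_iff] at h; omega
    have h2 : a ≤ 1 := by
      rcases h00.2 with h | h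
      · simp at h; omega
      · simp [Prod.ext_iff] at h; omega
    interval_cases a
    · -- a = 0 : z - x i must be 0, so z = (0,0) and z = (0,k)
      have e1 : m = 0 := by
        rcases h00.1 with h | h
        · simp at h
        · simpa [Prod.ext_iff] using h
      have e2 : m = k := by
        rcases h11.1 with h | h
        · simp at h
        · simp [Prod.ext_iff, sub_eq_zero] at h; exact h
      exact hk (e1 ▸ e2).symm
    · have e1 : m = 0 := by
        rcases h00.2 with h | h
        · simp at h
        · simp [Prod.ext_iff, sub_eq_zero] at h; exact h
      have e2 : m = k := by
        rcases h11.2 with h | h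
        · simp at h
        · simp [Prod.ext_iff, sub_eq_zero] at h; exact h.symm
      exact hk (e1 ▸ e2).symm
end

section
/- Let G be the additive subgroup of ℚ × ℚ generated by the set {(1/3ⁿ, 0) : n ∈ ℕ} ∪ {(0,1), (1/2, 1/2)}, with positive cone G⁺ = {(a,b) ∈ G : a > 0} ∪ {(0,0)}. Then G is ultrasimplicial: for every finite subset F of G⁺ there exists a finite ℤ-linearly independent subset S of G⁺ such that every element of F is a sum of elements of S with nonnegative integer coefficients. -/
/-- The subgroup of `ℚ × ℚ` generated by `{(1/3ⁿ, 0) : n ∈ ℕ}`, `(0, 1)` and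
`(1/2, 1/2)`. -/
def limitGroup : AddSubgroup (ℚ × ℚ) :=
  AddSubgroup.closure
    ((Set.range fun n : ℕ => ((1 / 3 ^ n : ℚ), (0 : ℚ)))
      ∪ {((0 : ℚ), (1 : ℚ)), ((1 / 2 : ℚ), (1 / 2 : ℚ))})

/-!
Write `e₁ N = (1/(2·3ᴺ), 1/2)` and `e₂ N = (1/(2·3ᴺ), -1/2)`. The group is the increasing union of
the lattices `ℤ e₁ N + ℤ e₂ N`, and `g = (x, y)` has coordinates `3ᴺx + y` and `3ᴺx - y` there. For
`x > 0` both are nonnegative once `3ᴺx ≥ |y|`, so a finite subset of the positive cone lies in the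
simplicial cone `ℕ e₁ N + ℕ e₂ N` for one large `N`, and `{e₁ N, e₂ N}` is the required set.
-/

open Filter

lemma isUltrasimplicial_of_exists_pair {G : Type*} [AddCommGroup G] {pos : Set G}
    (h : ∀ F : Finset G, ↑F ⊆ pos → ∃ x ∈ pos, ∃ y ∈ pos,
      LinearIndependent ℤ ![x, y] ∧ ∀ f ∈ F, ∃ a b : ℕ, f = a • x + b • y) :
    IsUltrasimplicial pos := by
  classical
  intro F hF
  obtain ⟨x, hx, y, hy, hind, hrep⟩ := h F hF
  have hxy : x ≠ y := fun hxy => by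
    simpa using LinearIndependent.pair_iff.1 hind 1 (-1) (by simp [hxy])
  refine ⟨{x, y}, by simp [Set.insert_subset_iff, hx, hy], ?_, fun f hf => ?_⟩
  · change LinearIndepOn ℤ id ((({x, y} : Finset G)) : Set G)
    rw [Finset.coe_pair, LinearIndepOn.pair_iff _ hxy]
    exact LinearIndependent.pair_iff.1 hind
  · obtain ⟨a, b, rfl⟩ := hrep f hf
    exact ⟨Function.update (fun _ => b) x a, by simp [Finset.sum_pair hxy, hxy.symm]⟩

lemma eventually_abs_snd_le {x : ℚ × ℚ} (hx : 0 < x.1 ∨ x = 0) :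
    ∀ᶠ N : ℕ in atTop, |x.2| ≤ 3 ^ N * x.1 := by
  rcases hx with hx | rfl
  · have := (tendsto_pow_atTop_atTop_of_one_lt (by norm_num : (1 : ℚ) < 3)).atTop_mul_const hx
    exact this.eventually_ge_atTop |x.2|
  · simp

namespace limitGroup

/-- `e₁ N`, `e₂ N` are the images in `ℚ × ℚ` of the standard basis of the `N`-th copy of `ℤ²` in
the inductive limit; the connecting matrix `[[2,1],[1,2]]` appears in `e₁_eq_succ`, `e₂_eq_succ`. -/
def e₁ (N : ℕ) : ℚ × ℚ := (1 / (2 * 3 ^ N), 1 / 2)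

def e₂ (N : ℕ) : ℚ × ℚ := (1 / (2 * 3 ^ N), -1 / 2)

lemma zsmul_e₁_add_zsmul_e₂ (N : ℕ) (a b : ℤ) :
    a • e₁ N + b • e₂ N = (((a + b : ℤ) : ℚ) / (2 * 3 ^ N), ((a - b : ℤ) : ℚ) / 2) := by
  simp only [e₁, e₂, Prod.smul_mk, Prod.mk_add_mk, zsmul_eq_mul]
  push_cast
  ring_nf

lemma coeff_eq_of_zsmul_e₁_add_zsmul_e₂ {N : ℕ} {a b : ℤ} {g : ℚ × ℚ}
    (h : a • e₁ N + b • e₂ N = g) : (a : ℚ) = 3 ^ N * g.1 + g.2 ∧ (b : ℚ) = 3 ^ N * g.1 - g.2 := by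
  rw [zsmul_e₁_add_zsmul_e₂] at h
  subst h
  push_cast
  constructor <;> field_simp <;> ring

lemma e₁_eq_succ (N : ℕ) : e₁ N = 2 • e₁ (N + 1) + e₂ (N + 1) := by
  simp only [e₁, e₂, Prod.smul_mk, Prod.mk_add_mk, nsmul_eq_mul, pow_succ]
  ext <;> field_simp <;> ring

lemma e₂_eq_succ (N : ℕ) : e₂ N = e₁ (N + 1) + 2 • e₂ (N + 1) := by
  simp only [e₁, e₂, Prod.smul_mk, Prod.mk_add_mk, nsmul_eq_mul, pow_succ]
  ext <;> field_simp <;> ring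

lemma e₁_add_e₂ (N : ℕ) : e₁ N + e₂ N = (1 / 3 ^ N, 0) := by
  simp only [e₁, e₂, Prod.mk_add_mk]
  ext <;> field_simp <;> ring

lemma e₁_fst_pos (N : ℕ) : 0 < (e₁ N).1 := by simp [e₁]

lemma e₂_fst_pos (N : ℕ) : 0 < (e₂ N).1 := by simp [e₂]

lemma one_div_three_pow_mem (N : ℕ) : ((1 / 3 ^ N : ℚ), (0 : ℚ)) ∈ limitGroup :=
  AddSubgroup.subset_closure (Or.inl ⟨N, rfl⟩)

lemma e₁_mem (N : ℕ) : e₁ N ∈ limitGroup := by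
  induction N with
  | zero => exact AddSubgroup.subset_closure (Or.inr (by simp [e₁]))
  | succ N ih =>
    have : e₁ (N + 1) = e₁ N - (1 / 3 ^ (N + 1), 0) := by
      rw [← e₁_add_e₂, e₁_eq_succ N]; abel
    rw [this]
    exact sub_mem ih (one_div_three_pow_mem _)

lemma e₂_mem (N : ℕ) : e₂ N ∈ limitGroup := by
  rw [show e₂ N = (1 / 3 ^ N, 0) - e₁ N by rw [← e₁_add_e₂]; abel]
  exact sub_mem (one_div_three_pow_mem N) (e₁_mem N)

def level (N : ℕ) : Submodule ℤ (ℚ × ℚ) := Submodule.span ℤ {e₁ N, e₂ N}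

lemma level_mono : Monotone level := by
  refine monotone_nat_of_le_succ fun N => Submodule.span_le.2 ?_
  rintro _ (rfl | rfl | -)
  · exact Submodule.mem_span_pair.2 ⟨2, 1, by simp [e₁_eq_succ N]⟩
  · exact Submodule.mem_span_pair.2 ⟨1, 2, by simp [e₂_eq_succ N]⟩

lemma le_iSup_level : limitGroup ≤ (⨆ N, level N).toAddSubgroup := by
  refine AddSubgroup.closure_le _ |>.2 ?_
  have mem (N : ℕ) (a b : ℤ) : a • e₁ N + b • e₂ N ∈ ⨆ N, level N :=
    Submodule.mem_iSup_of_mem N (Submodule.mem_span_pair.2 ⟨a, b, rfl⟩)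
  rintro _ ((⟨N, rfl⟩ | rfl | rfl) : _ ∨ _ ∨ _)
  · simpa [e₁_add_e₂] using mem N 1 1
  · convert mem 0 1 (-1) using 1
    norm_num [e₁, e₂]
  · convert mem 0 1 0 using 1
    simp [e₁]

lemma eventually_mem_level {g : ℚ × ℚ} (hg : g ∈ limitGroup) : ∀ᶠ N in atTop, g ∈ level N := by
  obtain ⟨N, hN⟩ := (Submodule.mem_iSup_of_directed _ level_mono.directed_le).1 (le_iSup_level hg)
  exact eventually_atTop.2 ⟨N, fun M hM => level_mono hM hN⟩

lemma exists_nsmul_of_mem_level {N : ℕ} {g : ℚ × ℚ} (hg : g ∈ level N)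
    (hcone : |g.2| ≤ 3 ^ N * g.1) : ∃ a b : ℕ, g = a • e₁ N + b • e₂ N := by
  obtain ⟨a, b, h⟩ := Submodule.mem_span_pair.1 hg
  obtain ⟨ha, hb⟩ := coeff_eq_of_zsmul_e₁_add_zsmul_e₂ h
  obtain ⟨hlo, hhi⟩ := abs_le.1 hcone
  lift a to ℕ using by exact_mod_cast (show (0 : ℚ) ≤ a by linarith)
  lift b to ℕ using by exact_mod_cast (show (0 : ℚ) ≤ b by linarith)
  exact ⟨a, b, by simpa [natCast_zsmul] using h.symm⟩

lemma linearIndependent_e₁_e₂ (N : ℕ) :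
    LinearIndependent ℤ ![(⟨e₁ N, e₁_mem N⟩ : limitGroup), ⟨e₂ N, e₂_mem N⟩] := by
  refine LinearIndependent.pair_iff.2 fun a b h => ?_
  have := coeff_eq_of_zsmul_e₁_add_zsmul_e₂ (congrArg Subtype.val h)
  simp only [ZeroMemClass.coe_zero, Prod.fst_zero, Prod.snd_zero, mul_zero, add_zero,
    sub_zero] at this
  exact_mod_cast this

end limitGroup

/-- The inductive limit of `ℤ²` under `[[2,1],[1,2]]`, realized as the group
generated by `(1/3ⁿ, 0)`, `(0,1)`, `(1/2, 1/2)` in `ℚ²` with strict ordering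
from the first coordinate, is ultrasimplicial. -/
theorem statement16 :
    IsUltrasimplicial
      ({g : limitGroup | 0 < ((g : ℚ × ℚ)).1} ∪ {0}) := by
  refine isUltrasimplicial_of_exists_pair fun F hF => ?_
  have hcone : ∀ f ∈ F, ∀ᶠ N in atTop,
      (f : ℚ × ℚ) ∈ limitGroup.level N ∧ |(f : ℚ × ℚ).2| ≤ 3 ^ N * (f : ℚ × ℚ).1 := fun f hf =>
    (limitGroup.eventually_mem_level f.2).and <| eventually_abs_snd_le <|
      (hF hf).imp id fun h => congrArg Subtype.val h
  obtain ⟨N, hN⟩ := ((eventually_all_finset F).2 hcone).exists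
  refine ⟨_, Or.inl (limitGroup.e₁_fst_pos N), _, Or.inl (limitGroup.e₂_fst_pos N),
    limitGroup.linearIndependent_e₁_e₂ N, fun f hf => ?_⟩
  obtain ⟨a, b, h⟩ := limitGroup.exists_nsmul_of_mem_level (hN f hf).1 (hN f hf).2
  exact ⟨a, b, Subtype.ext h⟩
end
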